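/- arXiv:1706.07128 — 2 statements merged into one kernel-verified Lean document; each statement's English description precedes it below -/
import Mathlib

section
/- Assume κ is h-admissible and normalized, and n ≥ 1. Let λ, μ ∈ 𝒫^ℓ_n(h), let X be the least dominant removable node of μ (the removable node of μ that is θ-dominated by every other removable node of μ), and let x = res(X) ∈ ℤ/eℤ. For Y ∈ Rem_x(λ) and T ∈ SStd⁺(λ ∖ {Y}, μ ∖ {X}), define the tableau T_Y : [λ] → I_μ by T_Y(Y) = I_X and T_Y(b) = T(b) for all b ∈ [λ] with b ≠ Y. Then the assignment (Y, T) ↦ T_Y is a bijection from the disjoint union ⨆_{Y ∈ Rem_x(λ)} SStd⁺(λ ∖ {Y}, μ ∖ {X}) onto SStd⁺(λ, μ). -/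
namespace BC

/-- A node `(r, c, m)`: row `r ≥ 1`, column `c ≥ 1` (1-based), component `m` (0-based). -/
abbrev Node : Type := ℕ × ℕ × ℕ

/-- An `ℓ`-multipartition: `row m r` is the length of the `(r+1)`-st row of the
`(m+1)`-st component. -/
structure MultiPartition (ℓ : ℕ) : Type where
  row : ℕ → ℕ → ℕ
  antitone : ∀ m r, row m (r + 1) ≤ row m r
  comp_bound : ∀ m, ℓ ≤ m → ∀ r, row m r = 0
  row_finite : ∀ m, ∃ R, ∀ r, R ≤ r → row m r = 0

/-- The number of boxes of a multipartition. -/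
noncomputable def size {ℓ : ℕ} (lam : MultiPartition ℓ) : ℕ :=
  ∑ᶠ (m : ℕ), ∑ᶠ (r : ℕ), lam.row m r

/-- The Young diagram of a multipartition, as a set of nodes. -/
def diag {ℓ : ℕ} (lam : MultiPartition ℓ) : Set Node :=
  {b | 1 ≤ b.1 ∧ 1 ≤ b.2.1 ∧ b.2.1 ≤ lam.row b.2.2 (b.1 - 1)}

/-- The residue `κ_m + c - r` of a node. -/
def res (e : ℕ) (κ : ℕ → ZMod e) (b : Node) : ZMod e :=
  κ b.2.2 + (b.2.1 : ZMod e) - (b.1 : ZMod e)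

/-- The (integral part of the) real-line position of a node: `m + ℓ(r - c)` (with
1-based component index). -/
def thetaPos (ℓ : ℕ) (b : Node) : ℤ :=
  ((b.2.2 : ℤ) + 1) + (ℓ : ℤ) * ((b.1 : ℤ) - (b.2.1 : ℤ))

/-- `NodeDom ℓ b b'` means `b ▷_θ b'` (`b` θ-dominates `b'`; `b'` is to the right of `b`). -/
def NodeDom (ℓ : ℕ) (b b' : Node) : Prop :=
  thetaPos ℓ b < thetaPos ℓ b' ∨
    (thetaPos ℓ b = thetaPos ℓ b' ∧ b.1 + b.2.1 < b'.1 + b'.2.1)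

/-- A set of nodes is the Young diagram of some `ℓ`-multipartition. -/
def IsDiag (ℓ : ℕ) (D : Set Node) : Prop := ∃ lam : MultiPartition ℓ, diag lam = D

/-- `b` is a removable node of the diagram `D`. -/
def RemD (ℓ : ℕ) (D : Set Node) (b : Node) : Prop := b ∈ D ∧ IsDiag ℓ (D \ {b})

/-- `b` is an addable node (in one of the first `h` columns) of the diagram `D`. -/
def AddD (h ℓ : ℕ) (D : Set Node) (b : Node) : Prop :=
  1 ≤ b.2.1 ∧ b.2.1 ≤ h ∧ b ∉ D ∧ IsDiag ℓ (D ∪ {b})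

/-- All components of `lam` have at most `h` columns. -/
def HCols (h : ℕ) {ℓ : ℕ} (lam : MultiPartition ℓ) : Prop := ∀ m r, lam.row m r ≤ h

/-- `κ` is `h`-admissible: for every `i ∈ ℤ/eℤ` at most one component index `m < ℓ`
satisfies `κ m ∈ {i, i+1, …, i+h-1}`. -/
def HAdmissible (e h ℓ : ℕ) (κ : ℕ → ZMod e) : Prop :=
  ∀ (i : ZMod e) (m t : ℕ), m < ℓ → t < ℓ →
    (∃ d : ℕ, d < h ∧ κ m = i + (d : ZMod e)) →
    (∃ d : ℕ, d < h ∧ κ t = i + (d : ZMod e)) → m = t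

/-- `κ` is normalized: lifting to `{0, …, e-1}` one has `κ_1 < κ_2 < ⋯ < κ_ℓ` and
`κ_ℓ + h ≢ κ_1 (mod e)`. -/
def Normalized (e h ℓ : ℕ) (κ : ℕ → ZMod e) : Prop :=
  (∀ m t : ℕ, m < t → t < ℓ → (κ m).val < (κ t).val) ∧
    κ (ℓ - 1) + (h : ZMod e) ≠ κ 0

/-- The shift vector `ρ` (0-based index `a = h·(m-1) + (i-1)` gives `ρ_a = e - κ_m - i + 1`). -/
def rhoZ (e h : ℕ) (κ : ℕ → ZMod e) (a : ℕ) : ℤ :=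
  (e : ℤ) - ((κ (a / h)).val : ℤ) - ((a % h : ℕ) : ℤ)

/-- The pairing `⟨x + ρ, ε_i - ε_j⟩`. -/
def pairV (e h : ℕ) (κ : ℕ → ZMod e) (x : ℕ → ℝ) (i j : ℕ) : ℝ :=
  (x i + (rhoZ e h κ i : ℝ)) - (x j + (rhoZ e h κ j : ℝ))

/-- `x` lies on the hyperplane `E(ε_i - ε_j, re)`. -/
def OnWall (e h : ℕ) (κ : ℕ → ZMod e) (x : ℕ → ℝ) (i j : ℕ) (r : ℤ) : Prop :=
  pairV e h κ x i j = (r : ℝ) * (e : ℝ)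

/-- `x ∈ E^<(ε_i - ε_j, re)`: `⟨x+ρ,α⟩ - re` and `⟨ρ,α⟩ - re` are nonzero of the same sign. -/
def InLt (e h : ℕ) (κ : ℕ → ZMod e) (x : ℕ → ℝ) (i j : ℕ) (r : ℤ) : Prop :=
  0 < (pairV e h κ x i j - (r : ℝ) * (e : ℝ)) *
      (pairV e h κ (fun _ => 0) i j - (r : ℝ) * (e : ℝ))

/-- `x ∈ E^>(ε_i - ε_j, re)`: `⟨x+ρ,α⟩ - re` and `⟨ρ,α⟩ - re` are nonzero of opposite signs. -/
def InGt (e h : ℕ) (κ : ℕ → ZMod e) (x : ℕ → ℝ) (i j : ℕ) (r : ℤ) : Prop :=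
  (pairV e h κ x i j - (r : ℝ) * (e : ℝ)) *
      (pairV e h κ (fun _ => 0) i j - (r : ℝ) * (e : ℝ)) < 0

/-- The reflection `s_{ε_i - ε_j, re} · x = x - (⟨x+ρ,α⟩ - re) α`. -/
def reflV (e h : ℕ) (κ : ℕ → ZMod e) (i j : ℕ) (r : ℤ) (x : ℕ → ℝ) : ℕ → ℝ :=
  fun a => x a - (pairV e h κ x i j - (r : ℝ) * (e : ℝ)) *
    ((if a = i then (1 : ℝ) else 0) - (if a = j then (1 : ℝ) else 0))

-- The local degree contribution `d_{α,r}(x,y)` for `α = ε_i - ε_j`.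
open Classical in
noncomputable def dval (e h : ℕ) (κ : ℕ → ZMod e) (x y : ℕ → ℝ) (i j : ℕ) (r : ℤ) : ℤ :=
  if OnWall e h κ x i j r ∧ InLt e h κ y i j r then 1
  else if InGt e h κ x i j r ∧ OnWall e h κ y i j r then -1
  else 0

-- The degree `d(x, y) = Σ_{α ∈ Φ⁺, r ∈ ℤ} d_{α,r}(x,y)` of a single step.
open Classical in
noncomputable def stepDeg (e h ℓ : ℕ) (κ : ℕ → ZMod e) (x y : ℕ → ℝ) : ℤ :=
  ∑ i ∈ Finset.range (h * ℓ), ∑ j ∈ Finset.range (h * ℓ),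
    if i < j then ∑ᶠ r : ℤ, dval e h κ x y i j r else 0

/-- The `k`-th point `s(k) = ε_{s(1)} + ⋯ + ε_{s(k)}` of a path (with 0-based steps). -/
def pts (s : ℕ → ℕ) (k : ℕ) : ℕ → ℝ :=
  fun a => ((Finset.filter (fun i => s i = a) (Finset.range k)).card : ℝ)

/-- `s` is a (normalized) path of length `n` with steps among `ε_1, …, ε_N`. -/
def IsPath (N n : ℕ) (s : ℕ → ℕ) : Prop :=
  (∀ k, k < n → s k < N) ∧ (∀ k, n ≤ k → s k = 0)

/-- The degree of a path of length `n`. -/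
noncomputable def pathDeg (e h ℓ : ℕ) (κ : ℕ → ZMod e) (n : ℕ) (s : ℕ → ℕ) : ℤ :=
  ∑ k ∈ Finset.range n, stepDeg e h ℓ κ (pts s k) (pts s (k + 1))

/-- `t` is obtained from `s` by one reflection `s^k_{α,re}` (at a point of `s` lying
on the corresponding hyperplane). -/
def ReflStep (e h ℓ n : ℕ) (κ : ℕ → ZMod e) (s t : ℕ → ℕ) : Prop :=
  IsPath (h * ℓ) n s ∧ IsPath (h * ℓ) n t ∧
  ∃ (k i j : ℕ) (r : ℤ), 1 ≤ k ∧ k ≤ n ∧ i < j ∧ j < h * ℓ ∧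
    OnWall e h κ (pts s k) i j r ∧
    (∀ l, l ≤ k → pts t l = pts s l) ∧
    (∀ l, k ≤ l → l ≤ n → pts t l = reflV e h κ i j r (pts s l))

/-- `PathSim … s t` : the path `t` can be obtained from `s` by finitely many reflections,
i.e. `t ∼ s`. -/
def PathSim (e h ℓ n : ℕ) (κ : ℕ → ZMod e) (s t : ℕ → ℕ) : Prop :=
  Relation.ReflTransGen (ReflStep e h ℓ n κ) s t

/-- A path is dominant if all of its points lie in the (closed interior of the)
dominant Weyl chamber. -/
def DominantPath (e h ℓ n : ℕ) (κ : ℕ → ZMod e) (s : ℕ → ℕ) : Prop :=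
  ∀ k, k ≤ n → ∀ m i j, m < ℓ → i < j → j < h →
    0 < pairV e h κ (pts s k) (h * m + i) (h * m + j)

/-- The length of the `i`-th column (1-based) of the `(m+1)`-st component. -/
noncomputable def colLen {ℓ : ℕ} (lam : MultiPartition ℓ) (m i : ℕ) : ℕ :=
  Set.ncard {r : ℕ | i ≤ lam.row m r}

/-- The point `pt(λ) ∈ E` associated to a multipartition. -/
noncomputable def ptv (h : ℕ) {ℓ : ℕ} (lam : MultiPartition ℓ) : ℕ → ℝ :=
  fun a => (colLen lam (a / h) (a % h + 1) : ℝ)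

/-- The point of `E` associated to a Young diagram (as a set of nodes). -/
noncomputable def ptD (h : ℕ) (D : Set Node) : ℕ → ℝ :=
  fun a => (Set.ncard {r : ℕ | ((r + 1 : ℕ), ((a % h) + 1 : ℕ), (a / h : ℕ)) ∈ D} : ℝ)

/-- `X` is the least dominant removable node of `D`: it is removable and θ-dominated by
every other removable node. -/
def IsLeastRem (ℓ : ℕ) (D : Set Node) (X : Node) : Prop :=
  RemD ℓ D X ∧ ∀ Y, RemD ℓ D Y → Y ≠ X → NodeDom ℓ Y X

/-- The least dominant removable node of a diagram (chosen by `Classical.epsilon`). -/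
noncomputable def leastRem (ℓ : ℕ) (D : Set Node) : Node :=
  Classical.epsilon (IsLeastRem ℓ D)

/-- `PDiag ℓ D j` is the diagram `D` with its least dominant removable node removed `j`
times; for `D = [μ]` with `|μ| = n` this is `μ^{(n-j)}`. -/
noncomputable def PDiag (ℓ : ℕ) (D : Set Node) : ℕ → Set Node
  | 0 => D
  | j + 1 => PDiag ℓ D j \ {leastRem ℓ (PDiag ℓ D j)}

/-- The distinguished path `t^μ` of length `n`: its `k`-th step (0-based) is the basis
direction of the column of `X_{k+1}`, the least dominant removable node of `μ^{(k+1)}`. -/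
noncomputable def tPath (h ℓ n : ℕ) (μ : MultiPartition ℓ) : ℕ → ℕ :=
  fun k =>
    if k < n then
      h * (leastRem ℓ (PDiag ℓ (diag μ) (n - 1 - k))).2.2 +
        ((leastRem ℓ (PDiag ℓ (diag μ) (n - 1 - k))).2.1 - 1)
    else 0

/-- `u ↑_{α,re} v` : `u = s_{α,re}·v`, `u ∈ E^<(α,re)`, `v ∈ E^>(α,re)`. -/
def UpStep (e h ℓ : ℕ) (κ : ℕ → ZMod e) (u v : ℕ → ℝ) : Prop :=
  ∃ (i j : ℕ) (r : ℤ), i < j ∧ j < h * ℓ ∧ u = reflV e h κ i j r v ∧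
    InLt e h κ u i j r ∧ InGt e h κ v i j r

/-- The strong linkage order: `Up … u v` means `u ↑ v`. -/
def Up (e h ℓ : ℕ) (κ : ℕ → ZMod e) : (ℕ → ℝ) → (ℕ → ℝ) → Prop :=
  Relation.ReflTransGen (UpStep e h ℓ κ)

/-- The length `ℓ(v)`: the number of hyperplanes lying strictly between `v` and the
origin. -/
noncomputable def lenPt (e h ℓ : ℕ) (κ : ℕ → ZMod e) (v : ℕ → ℝ) : ℕ :=
  Set.ncard {p : ℕ × ℕ × ℤ | p.1 < p.2.1 ∧ p.2.1 < h * ℓ ∧ InGt e h κ v p.1 p.2.1 p.2.2}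

/-- The loading `I_{(r,c,m)} = m + ℓ(r-c) + (r+c)ε` of a node (with 1-based component). -/
def load (ℓ : ℕ) (ε : ℝ) (b : Node) : ℝ :=
  ((b.2.2 : ℝ) + 1) + (ℓ : ℝ) * ((b.1 : ℝ) - (b.2.1 : ℝ)) + ((b.1 : ℝ) + (b.2.1 : ℝ)) * ε

/-- `T` is a residue-respecting semistandard tableau of shape the diagram `D` and weight
the diagram `Dw`, normalized to vanish off `D`. -/
def IsSStd (e ℓ : ℕ) (κ : ℕ → ZMod e) (ε : ℝ) (D Dw : Set Node) (T : Node → ℝ) : Prop :=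
  Set.BijOn T D (load ℓ ε '' Dw) ∧
  (∀ b ∈ D, b.1 = 1 → b.2.1 = 1 → ((b.2.2 : ℝ) + 1) < T b) ∧
  (∀ b ∈ D, 2 ≤ b.1 → T (b.1 - 1, b.2.1, b.2.2) + (ℓ : ℝ) < T b) ∧
  (∀ b ∈ D, 2 ≤ b.2.1 → T (b.1, b.2.1 - 1, b.2.2) - (ℓ : ℝ) < T b) ∧
  (∀ b ∈ D, ∀ b' ∈ Dw, T b = load ℓ ε b' → res e κ b = res e κ b') ∧
  (∀ b, b ∉ D → T b = 0)

/-- The node `Y_{k+1}` of the tableau `T`: the node of the shape diagram whose entry is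
the loading of `X_{k+1}`. -/
noncomputable def Ynd (ℓ n : ℕ) (ε : ℝ) (Dlam Dmu : Set Node) (T : Node → ℝ) (k : ℕ) :
    Node :=
  Classical.epsilon (fun b : Node =>
    b ∈ Dlam ∧ T b = load ℓ ε (leastRem ℓ (PDiag ℓ Dmu (n - 1 - k))))

/-- The path `ω(T)` associated to a semistandard tableau. -/
noncomputable def omegaT (h ℓ n : ℕ) (ε : ℝ) (Dlam Dmu : Set Node) (T : Node → ℝ) :
    ℕ → ℕ :=
  fun k =>
    if k < n then
      h * (Ynd ℓ n ε Dlam Dmu T k).2.2 + ((Ynd ℓ n ε Dlam Dmu T k).2.1 - 1)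
    else 0

/-- The shape `λ^{(k)}` of the restriction of the tableau `T` to entries in `I_{μ^{(k)}}`. -/
noncomputable def LShape (ℓ n : ℕ) (ε : ℝ) (Dlam Dmu : Set Node) (T : Node → ℝ) (k : ℕ) :
    Set Node :=
  {b | b ∈ Dlam ∧ T b ∈ load ℓ ε '' PDiag ℓ Dmu (n - k)}

/-- The degree of a semistandard tableau, computed from its component word. -/
noncomputable def degT (e h ℓ n : ℕ) (κ : ℕ → ZMod e) (ε : ℝ) (Dlam Dmu : Set Node)
    (T : Node → ℝ) : ℤ :=
  ∑ k ∈ Finset.range n,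
    ((Set.ncard {A | AddD h ℓ (LShape ℓ n ε Dlam Dmu T k) A ∧
        res e κ A = res e κ (Ynd ℓ n ε Dlam Dmu T k) ∧
        NodeDom ℓ (Ynd ℓ n ε Dlam Dmu T k) A} : ℤ) -
      (Set.ncard {R | RemD ℓ (LShape ℓ n ε Dlam Dmu T k) R ∧
        res e κ R = res e κ (Ynd ℓ n ε Dlam Dmu T k) ∧
        NodeDom ℓ (Ynd ℓ n ε Dlam Dmu T k) R} : ℤ))

/-- The θ-dominance order on multipartitions: `ThetaDomMP e ℓ κ μ lam` means `μ ⊴_θ λ`. -/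
noncomputable def ThetaDomMP (e ℓ : ℕ) (κ : ℕ → ZMod e) (μ lam : MultiPartition ℓ) : Prop :=
  ∀ b ∈ diag μ,
    Set.ncard {b' | b' ∈ diag μ ∧ res e κ b' = res e κ b ∧ NodeDom ℓ b' b} ≤
      Set.ncard {b' | b' ∈ diag lam ∧ res e κ b' = res e κ b ∧ NodeDom ℓ b' b}

/-- The multipartition `det_h(λ)`, obtained by prepending a row of length `h` to each
component. -/
def detMP (h : ℕ) {ℓ : ℕ} (lam : MultiPartition ℓ) (hc : HCols h lam) : MultiPartition ℓ where
  row m r := if m < ℓ then (if r = 0 then h else lam.row m (r - 1)) else 0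
  antitone m r := by
    by_cases hm : m < ℓ
    · by_cases hr : r = 0
      · subst hr
        simpa [hm] using hc m 0
      · have h2 : r - 1 + 1 = r := Nat.succ_pred_eq_of_pos (Nat.pos_of_ne_zero hr)
        have h3 := lam.antitone m (r - 1)
        rw [h2] at h3
        simpa [hm, hr] using h3
    · simp [hm]
  comp_bound m hm r := by simp [Nat.not_lt.mpr hm]
  row_finite m := by
    obtain ⟨R, hR⟩ := lam.row_finite m
    refine ⟨R + 1, fun r hr => ?_⟩
    by_cases hm : m < ℓ
    · have hr0 : r ≠ 0 := by omega
      simp only [hm, if_true, hr0, if_false]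
      exact hR (r - 1) (by omega)
    · simp [hm]

/-- The path `det(s)`: first the `N = hℓ` steps `ε_1, …, ε_{hℓ}`, then the steps of `s`. -/
def detPath (N n : ℕ) (s : ℕ → ℕ) : ℕ → ℕ :=
  fun k => if k < N then k else if k < N + n then s (k - N) else 0



section Aux

variable {e h ℓ n : ℕ} {κ : ℕ → ZMod e} {ε : ℝ}

lemma load_eq_thetaPos (ℓ : ℕ) (ε : ℝ) (b : Node) :
    load ℓ ε b = (thetaPos ℓ b : ℝ) + ((b.1 + b.2.1 : ℕ) : ℝ) * ε := by
  unfold load thetaPos; push_cast; ring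

lemma comp_lt_of_mem_diag {lam : MultiPartition ℓ} {b : Node} (hb : b ∈ diag lam) :
    b.2.2 < ℓ := by
  by_contra hm
  have := lam.comp_bound b.2.2 (le_of_not_gt hm) (b.1 - 1)
  obtain ⟨h1, h2, h3⟩ := hb
  omega

lemma row_antitone (lam : MultiPartition ℓ) (m : ℕ) {i j : ℕ} (hij : i ≤ j) :
    lam.row m j ≤ lam.row m i :=
  antitone_nat_of_succ_le (lam.antitone m) hij

lemma rc_le_size {lam : MultiPartition ℓ} {b : Node} (hb : b ∈ diag lam) :
    b.1 + b.2.1 ≤ size lam + 1 := by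
  obtain ⟨hr, hc, hrow⟩ := hb
  set r := b.1; set c := b.2.1; set m := b.2.2
  -- sum over first r rows of component m
  have hstep : (r - 1) + c ≤ ∑ i ∈ Finset.range r, lam.row m i := by
    have hr1 : r = (r - 1) + 1 := by omega
    rw [hr1, Finset.sum_range_succ]
    have h1 : ∀ i ∈ Finset.range (r - 1), 1 ≤ lam.row m i := by
      intro i hi
      simp only [Finset.mem_range] at hi
      have := row_antitone lam m (le_of_lt hi)
      omega
    have h2 : (r - 1 : ℕ) ≤ ∑ i ∈ Finset.range (r - 1), lam.row m i := by
      calc (r - 1 : ℕ) = ∑ _i ∈ Finset.range (r - 1), 1 := by simp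
        _ ≤ _ := Finset.sum_le_sum h1
    omega
  obtain ⟨R, hR⟩ := lam.row_finite m
  have hsup : Function.support (lam.row m) ⊆ (Finset.range (max r R) : Finset ℕ) := by
    intro i hi
    simp only [Function.mem_support] at hi
    simp only [Finset.coe_range, Set.mem_Iio]
    by_contra hge
    exact hi (hR i (by omega))
  have hSm : ∑ᶠ i, lam.row m i = ∑ i ∈ Finset.range (max r R), lam.row m i :=
    finsum_eq_sum_of_support_subset _ hsup
  have hA : ∑ i ∈ Finset.range r, lam.row m i ≤ ∑ᶠ i, lam.row m i := by
    rw [hSm]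
    exact Finset.sum_le_sum_of_subset (by
      intro i hi; simp only [Finset.mem_range] at *; omega)
  have hml : m < ℓ := by
    by_contra hm
    have := lam.comp_bound m (le_of_not_gt hm) (r - 1)
    omega
  have hsupout : Function.support (fun m' => ∑ᶠ i, lam.row m' i) ⊆
      (Finset.range ℓ : Finset ℕ) := by
    intro m' hm'
    simp only [Function.mem_support] at hm'
    simp only [Finset.coe_range, Set.mem_Iio]
    by_contra hge
    apply hm'
    have : ∀ i, lam.row m' i = 0 := lam.comp_bound m' (by omega)
    simp [this]
  have hB : (∑ᶠ i, lam.row m i) ≤ size lam := by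
    unfold size
    rw [finsum_eq_sum_of_support_subset _ hsupout]
    exact Finset.single_le_sum (f := fun m' => ∑ᶠ i, lam.row m' i)
      (fun _ _ => Nat.zero_le _) (Finset.mem_range.mpr hml)
  omega

end Aux


section Ord

variable {e h ℓ n : ℕ} {κ : ℕ → ZMod e} {ε : ℝ}

lemma eps_lt_half (hε0 : 0 < ε) (hε1 : ε < 1 / (2 * ((n : ℝ) + 2))) {s : ℕ}
    (hs : s ≤ n + 1) : (s : ℝ) * ε < 1 / 2 := by
  have h2 : (0:ℝ) < 2 * ((n:ℝ) + 2) := by positivity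
  have h3 : ε * (2 * ((n:ℝ) + 2)) < 1 := (lt_div_iff₀ h2).mp hε1
  have hsr : (s:ℝ) ≤ (n:ℝ) + 1 := by exact_mod_cast hs
  nlinarith

lemma load_lt_of_nodeDom (hε0 : 0 < ε) (hε1 : ε < 1 / (2 * ((n : ℝ) + 2)))
    {b b' : Node} (hb : b.1 + b.2.1 ≤ n + 1) (hd : NodeDom ℓ b b') :
    load ℓ ε b < load ℓ ε b' := by
  rw [load_eq_thetaPos, load_eq_thetaPos]
  have h1 : ((b.1 + b.2.1 : ℕ) : ℝ) * ε < 1 / 2 := eps_lt_half hε0 hε1 hb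
  have h0 : (0:ℝ) ≤ ((b'.1 + b'.2.1 : ℕ) : ℝ) * ε := by positivity
  rcases hd with hlt | ⟨heq, hrc⟩
  · have : (thetaPos ℓ b : ℝ) + 1 ≤ (thetaPos ℓ b' : ℝ) := by exact_mod_cast hlt
    linarith
  · rw [heq]
    have : ((b.1 + b.2.1 : ℕ) : ℝ) < ((b'.1 + b'.2.1 : ℕ) : ℝ) := by exact_mod_cast hrc
    nlinarith

lemma nodeDom_trichotomy (ℓ : ℕ) (b b' : Node) :
    NodeDom ℓ b b' ∨ NodeDom ℓ b' b ∨
      (thetaPos ℓ b = thetaPos ℓ b' ∧ b.1 + b.2.1 = b'.1 + b'.2.1) := by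
  unfold NodeDom; omega

lemma load_lt_iff_nodeDom (hε0 : 0 < ε) (hε1 : ε < 1 / (2 * ((n : ℝ) + 2)))
    {b b' : Node} (hb : b.1 + b.2.1 ≤ n + 1) (hb' : b'.1 + b'.2.1 ≤ n + 1) :
    load ℓ ε b < load ℓ ε b' ↔ NodeDom ℓ b b' := by
  constructor
  · intro hlt
    rcases nodeDom_trichotomy ℓ b b' with hd | hd | ⟨h1, h2⟩
    · exact hd
    · exact absurd (load_lt_of_nodeDom hε0 hε1 hb' hd) (by linarith)
    · exfalso
      rw [load_eq_thetaPos, load_eq_thetaPos, h1, h2] at hlt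
      exact lt_irrefl _ hlt
  · exact load_lt_of_nodeDom hε0 hε1 hb

lemma ell_mul_eq_small {ℓ : ℕ} {D a : ℤ} (hmul : (ℓ:ℤ) * D = a) (ha : |a| < ℓ) :
    D = 0 ∧ a = 0 := by
  obtain ⟨ha1, ha2⟩ := abs_lt.mp ha
  rcases lt_trichotomy D 0 with hD | hD | hD
  · exfalso
    have h1 : (ℓ:ℤ) * D ≤ (ℓ:ℤ) * (-1) :=
      mul_le_mul_of_nonneg_left (by omega) (by positivity)
    linarith
  · refine ⟨hD, ?_⟩
    rw [hD, mul_zero] at hmul; omega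
  · exfalso
    have h1 : (ℓ:ℤ) * 1 ≤ (ℓ:ℤ) * D :=
      mul_le_mul_of_nonneg_left (by omega) (by positivity)
    linarith

lemma load_inj (hε0 : 0 < ε) (hε1 : ε < 1 / (2 * ((n : ℝ) + 2)))
    {b b' : Node} (hb : b.1 + b.2.1 ≤ n + 1) (hb' : b'.1 + b'.2.1 ≤ n + 1)
    (hmb : b.2.2 < ℓ) (hmb' : b'.2.2 < ℓ)
    (heq : load ℓ ε b = load ℓ ε b') : b = b' := by
  have h1 : ¬ NodeDom ℓ b b' := fun hd =>
    absurd (load_lt_of_nodeDom hε0 hε1 hb hd) (by rw [heq]; exact lt_irrefl _)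
  have h2 : ¬ NodeDom ℓ b' b := fun hd =>
    absurd (load_lt_of_nodeDom hε0 hε1 hb' hd) (by rw [heq]; exact lt_irrefl _)
  rcases nodeDom_trichotomy ℓ b b' with hd | hd | ⟨ht, hs⟩
  · exact absurd hd h1
  · exact absurd hd h2
  · unfold thetaPos at ht
    have hkey : (ℓ:ℤ) * (((b'.1:ℤ) - b'.2.1) - ((b.1:ℤ) - b.2.1)) = (b.2.2 : ℤ) - b'.2.2 := by
      ring_nf
      ring_nf at ht
      omega
    have habs : |(b.2.2 : ℤ) - b'.2.2| < ℓ := by rw [abs_lt]; omega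
    obtain ⟨hD0, ha0⟩ := ell_mul_eq_small hkey habs
    have : b.1 = b'.1 ∧ b.2.1 = b'.2.1 ∧ b.2.2 = b'.2.2 := by omega
    obtain ⟨e1, e2, e3⟩ := this
    exact Prod.ext e1 (Prod.ext e2 e3)

lemma res_down (e : ℕ) (κ : ℕ → ZMod e) (r c m : ℕ) :
    res e κ (r + 1, c, m) = res e κ (r, c, m) - 1 := by
  unfold res; push_cast; ring

lemma res_right (e : ℕ) (κ : ℕ → ZMod e) (r c m : ℕ) :
    res e κ (r, c + 1, m) = res e κ (r, c, m) + 1 := by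
  unfold res; push_cast; ring

end Ord

section Kappa

variable {e h ℓ : ℕ} {κ : ℕ → ZMod e}

lemma kappa_inj (hh : 1 ≤ h) (hadm : HAdmissible e h ℓ κ) {m t : ℕ}
    (hm : m < ℓ) (ht : t < ℓ) (heq : κ m = κ t) : m = t :=
  hadm (κ t) m t hm ht ⟨0, by omega, by simpa using heq⟩ ⟨0, by omega, by simp⟩

lemma no_small_shift (hh : 1 ≤ h) (hhe : h < e) (hadm : HAdmissible e h ℓ κ)
    {m t d : ℕ} (hm : m < ℓ) (ht : t < ℓ) (hd1 : 1 ≤ d) (hd2 : d < h)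
    (heq : κ t = κ m + (d : ZMod e)) : False := by
  have hmt : t = m := hadm (κ m) t m ht hm ⟨d, hd2, heq⟩ ⟨0, by omega, by simp⟩
  subst hmt
  rw [left_eq_add] at heq
  have := (ZMod.natCast_eq_zero_iff d e).mp heq
  have := Nat.le_of_dvd (by omega) this
  omega

lemma shift_h (hh : 1 ≤ h) (hl : 1 ≤ ℓ) (hhe : h < e)
    (hadm : HAdmissible e h ℓ κ) (hnorm : Normalized e h ℓ κ)
    {m t : ℕ} (hm : m < ℓ) (ht : t < ℓ) (heq : κ t = κ m + (h : ZMod e)) : m < t := by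
  haveI : NeZero e := ⟨by omega⟩
  have hne : m ≠ t := by
    intro hmt
    subst hmt
    rw [left_eq_add] at heq
    have := (ZMod.natCast_eq_zero_iff h e).mp heq
    have := Nat.le_of_dvd (by omega) this
    omega
  by_contra htm
  have htm' : t < m := by omega
  have hba : (κ t).val < (κ m).val := hnorm.1 t m htm' hm
  have hval : (κ t).val = ((κ m).val + h) % e := by
    rw [heq, ZMod.val_add, ZMod.val_natCast_of_lt hhe]
  have hae : (κ m).val < e := ZMod.val_lt _
  have hbe : (κ t).val < e := ZMod.val_lt _
  by_cases hcase : (κ m).val + h < e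
  · rw [Nat.mod_eq_of_lt hcase] at hval; omega
  · have hb2 : (κ t).val = (κ m).val + h - e := by
      have : ((κ m).val + h) % e = (κ m).val + h - e := by
        rw [Nat.mod_eq_sub_mod (by omega), Nat.mod_eq_of_lt (by omega)]
      omega
    have hB : (κ 0).val ≤ (κ t).val := by
      rcases Nat.eq_zero_or_pos t with h0 | h0
      · rw [h0]
      · exact le_of_lt (hnorm.1 0 t h0 ht)
    have hA : (κ m).val ≤ (κ (ℓ - 1)).val := by
      rcases Nat.lt_or_ge m (ℓ - 1) with h0 | h0
      · exact le_of_lt (hnorm.1 m (ℓ - 1) h0 (by omega))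
      · have : m = ℓ - 1 := by omega
        rw [this]
    set A := (κ (ℓ - 1)).val with hAdef
    set B := (κ 0).val with hBdef
    have hAe : A < e := ZMod.val_lt _
    have hd0 : 1 ≤ B + e - A := by omega
    have hd0h : B + e - A ≤ h := by omega
    have hκ0 : κ 0 = κ (ℓ - 1) + ((B + e - A : ℕ) : ZMod e) := by
      have h1 : ((A : ℕ) : ZMod e) = κ (ℓ - 1) := ZMod.natCast_rightInverse _
      have h2 : ((B : ℕ) : ZMod e) = κ 0 := ZMod.natCast_rightInverse _
      rw [← h1, ← h2, ← Nat.cast_add]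
      have : A + (B + e - A) = B + e := by omega
      rw [this]
      push_cast [ZMod.natCast_self]
      ring
    rcases Nat.lt_or_ge (B + e - A) h with hlt | hge
    · exact no_small_shift hh hhe hadm (by omega) (by omega) hd0 hlt hκ0
    · have : B + e - A = h := by omega
      rw [this] at hκ0
      exact hnorm.2 hκ0.symm

lemma spacing (hh : 1 ≤ h) (hl : 1 ≤ ℓ) (hhe : h < e)
    (hadm : HAdmissible e h ℓ κ) (hnorm : Normalized e h ℓ κ)
    {mv mX : ℕ} (hmv : mv < ℓ) (hmX : mX < ℓ) {D : ℤ} {g : ℕ}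
    (hg1 : 1 ≤ g) (hg2 : g ≤ h)
    (hκ : κ mv = κ mX + (g : ZMod e) - ((D : ℤ) : ZMod e))
    (hδ : 0 ≤ (mX : ℤ) - (mv : ℤ) + (ℓ : ℤ) * D) :
    ((g : ℤ) * (ℓ : ℤ) ≤ (mX : ℤ) - (mv : ℤ) + (ℓ : ℤ) * D) ∧
      ((mX : ℤ) - (mv : ℤ) + (ℓ : ℤ) * D = (g : ℤ) * (ℓ : ℤ) → mv = mX ∧ D = (g : ℤ)) := by
  have hmvZ : (mv : ℤ) < (ℓ : ℤ) := by exact_mod_cast hmv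
  have hmXZ : (mX : ℤ) < (ℓ : ℤ) := by exact_mod_cast hmX
  have hlZ : (1 : ℤ) ≤ (ℓ : ℤ) := by exact_mod_cast hl
  have hD0 : 0 ≤ D := by
    by_contra hD
    have h1 : (ℓ:ℤ) * D ≤ (ℓ:ℤ) * (-1) := by
      apply mul_le_mul_of_nonneg_left (by omega) (by positivity)
    have hmv0 : (0:ℤ) ≤ (mv:ℤ) := by positivity
    linarith
  rcases lt_trichotomy D (g : ℤ) with hDg | hDg | hDg
  · exfalso
    set dn : ℕ := g - D.toNat with hdn
    have hDt : (D.toNat : ℤ) = D := Int.toNat_of_nonneg hD0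
    have hdn1 : 1 ≤ dn := by omega
    have hdnh : dn ≤ h := by omega
    have hdnZ : (dn : ℤ) = (g : ℤ) - D := by omega
    have hcast : ((dn : ℕ) : ZMod e) = (g : ZMod e) - ((D : ℤ) : ZMod e) := by
      have h5 := congrArg (fun z : ℤ => ((z : ZMod e))) hdnZ
      push_cast at h5
      exact h5
    have hκ' : κ mv = κ mX + ((dn : ℕ) : ZMod e) := by
      rw [hκ, hcast]; ring
    rcases Nat.lt_or_ge dn h with hlt | hge
    · exact no_small_shift hh hhe hadm hmX hmv hdn1 hlt hκ'
    · have hdneq : dn = h := by omega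
      have hgh : g = h := by omega
      have hDz : D = 0 := by omega
      rw [hdneq] at hκ'
      have hcon := shift_h hh hl hhe hadm hnorm hmX hmv hκ'
      rw [hDz, mul_zero] at hδ
      omega
  · have hmveq : mv = mX := by
      apply kappa_inj hh hadm hmv hmX
      rw [hκ, hDg]
      push_cast
      ring
    subst hmveq
    have hc : (g:ℤ) * (ℓ:ℤ) = (ℓ:ℤ) * (g:ℤ) := mul_comm _ _
    constructor
    · rw [hDg]; linarith
    · intro _; exact ⟨rfl, hDg⟩
  · have h6 : (ℓ:ℤ) * ((g:ℤ) + 1) ≤ (ℓ:ℤ) * D := by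
      apply mul_le_mul_of_nonneg_left (by omega) (by positivity)
    have hc : (g:ℤ) * (ℓ:ℤ) = (ℓ:ℤ) * (g:ℤ) := mul_comm _ _
    have hmX0 : (0:ℤ) ≤ (mX:ℤ) := by positivity
    have hmv' : (mv:ℤ) ≤ (ℓ:ℤ) - 1 := by omega
    constructor
    · linarith
    · intro heq; exfalso; linarith

end Kappa


section Diag

variable {e h ℓ n : ℕ} {κ : ℕ → ZMod e} {ε : ℝ}

lemma mem_diag_iff {lam : MultiPartition ℓ} {r c m : ℕ} :
    ((r, c, m) : Node) ∈ diag lam ↔ 1 ≤ r ∧ 1 ≤ c ∧ c ≤ lam.row m (r - 1) := Iff.rfl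

lemma remD_iff {μ : MultiPartition ℓ} {b : Node} :
    RemD ℓ (diag μ) b ↔
      b ∈ diag μ ∧ (b.1 + 1, b.2.1, b.2.2) ∉ diag μ ∧ (b.1, b.2.1 + 1, b.2.2) ∉ diag μ := by
  obtain ⟨r, c, m⟩ := b
  simp only [mem_diag_iff]
  constructor
  · rintro ⟨hb, lam', hlam'⟩
    rw [mem_diag_iff] at hb
    obtain ⟨hr, hc1, hrow⟩ := hb
    have hb_not : ((r, c, m) : Node) ∉ diag lam' := by
      rw [hlam']; intro hx; exact hx.2 rfl
    rw [mem_diag_iff] at hb_not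
    have hlt : lam'.row m (r - 1) < c := by
      by_contra hge
      exact hb_not ⟨hr, hc1, by omega⟩
    have hprev : c - 1 ≤ lam'.row m (r - 1) := by
      rcases Nat.eq_or_lt_of_le hc1 with h1 | h1
      · omega
      · have hmem : ((r, c - 1, m) : Node) ∈ diag lam' := by
          rw [hlam']
          refine ⟨mem_diag_iff.mpr ⟨hr, by omega, by omega⟩, ?_⟩
          intro hx
          rw [Set.mem_singleton_iff, Prod.mk.injEq, Prod.mk.injEq] at hx
          omega
        rw [mem_diag_iff] at hmem
        omega
    refine ⟨⟨hr, hc1, hrow⟩, ?_, ?_⟩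
    · intro hmem
      have hmem' : ((r + 1, c, m) : Node) ∈ diag lam' := by
        rw [hlam']
        refine ⟨mem_diag_iff.mpr hmem, ?_⟩
        intro hx
        rw [Set.mem_singleton_iff, Prod.mk.injEq, Prod.mk.injEq] at hx
        omega
      rw [mem_diag_iff] at hmem'
      have h3 : lam'.row m (r + 1 - 1) ≤ lam'.row m (r - 1) :=
        row_antitone lam' m (by omega)
      omega
    · intro hmem
      have hmem' : ((r, c + 1, m) : Node) ∈ diag lam' := by
        rw [hlam']
        refine ⟨mem_diag_iff.mpr hmem, ?_⟩
        intro hx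
        rw [Set.mem_singleton_iff, Prod.mk.injEq, Prod.mk.injEq] at hx
        omega
      rw [mem_diag_iff] at hmem'
      omega
  · rintro ⟨hb, h1, h2⟩
    obtain ⟨hr, hc1, hrow⟩ := hb
    have hm : m < ℓ := comp_lt_of_mem_diag (lam := μ) (mem_diag_iff.mpr ⟨hr, hc1, hrow⟩)
    have hroweq : μ.row m (r - 1) = c := by
      by_contra hne
      exact h2 ⟨hr, by omega, by omega⟩
    have hbelow : μ.row m r < c := by
      by_contra hge
      refine h1 ⟨by omega, hc1, ?_⟩
      have : r + 1 - 1 = r := by omega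
      rw [this]; omega
    refine ⟨⟨hr, hc1, hrow⟩, ⟨fun m' r' => if m' = m ∧ r' = r - 1 then c - 1 else μ.row m' r',
      ?_, ?_, ?_⟩, ?_⟩
    · intro m' r'
      split_ifs with hA hB hB
      · exact le_rfl
      · obtain ⟨hA1, hA2⟩ := hA
        rw [hA1]
        have h5 := row_antitone μ m (show r' ≤ r - 1 by omega)
        omega
      · obtain ⟨hB1, hB2⟩ := hB
        rw [hB1]
        have h4 : μ.row m (r' + 1) = μ.row m r := by rw [show r' + 1 = r by omega]
        omega
      · exact μ.antitone m' r'
    · intro m' hm' r'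
      show (if m' = m ∧ r' = r - 1 then c - 1 else μ.row m' r') = 0
      split_ifs with hA
      · omega
      · exact μ.comp_bound m' hm' r'
    · intro m'
      obtain ⟨R, hR⟩ := μ.row_finite m'
      refine ⟨max R r, fun r' hr' => ?_⟩
      show (if m' = m ∧ r' = r - 1 then c - 1 else μ.row m' r') = 0
      split_ifs with hA
      · omega
      · exact hR r' (by omega)
    · ext b'
      obtain ⟨r', c', m'⟩ := b'
      simp only [Set.mem_diff, mem_diag_iff, diag, Set.mem_setOf_eq]
      constructor
      · rintro ⟨h1', h2', h3'⟩
        split_ifs at h3' with hA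
        · obtain ⟨hA1, hA2⟩ := hA
          have hr'' : r' = r := by omega
          refine ⟨⟨h1', h2', ?_⟩, ?_⟩
          · rw [hA1, hA2]
            omega
          · intro hx
            rw [Set.mem_singleton_iff, Prod.mk.injEq, Prod.mk.injEq] at hx
            omega
        · refine ⟨⟨h1', h2', h3'⟩, ?_⟩
          intro hx
          rw [Set.mem_singleton_iff, Prod.mk.injEq, Prod.mk.injEq] at hx
          exact hA ⟨hx.2.2, by omega⟩
      · rintro ⟨⟨h1', h2', h3'⟩, hne⟩
        rw [Set.mem_singleton_iff, Prod.mk.injEq, Prod.mk.injEq] at hne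
        refine ⟨h1', h2', ?_⟩
        split_ifs with hA
        · obtain ⟨hA1, hA2⟩ := hA
          have hr'' : r' = r := by omega
          rw [hA1, hA2] at h3'
          omega
        · exact h3'

lemma remD_iff' {μ : MultiPartition ℓ} {r c m : ℕ} :
    RemD ℓ (diag μ) (r, c, m) ↔
      1 ≤ r ∧ 1 ≤ c ∧ μ.row m (r - 1) = c ∧ μ.row m r < c := by
  constructor
  · intro hRem
    obtain ⟨hb, h1, h2⟩ := remD_iff.mp hRem
    have h1' : ((r + 1, c, m) : Node) ∉ diag μ := h1
    have h2' : ((r, c + 1, m) : Node) ∉ diag μ := h2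
    rw [mem_diag_iff] at hb
    rw [mem_diag_iff, Nat.add_sub_cancel] at h1'
    rw [mem_diag_iff] at h2'
    refine ⟨hb.1, hb.2.1, by omega, by omega⟩
  · rintro ⟨hr, hc, hco, hbelow⟩
    rw [remD_iff]
    refine ⟨mem_diag_iff.mpr ⟨hr, hc, by omega⟩, ?_, ?_⟩
    · show ((r + 1, c, m) : Node) ∉ diag μ
      rw [mem_diag_iff, Nat.add_sub_cancel]
      omega
    · show ((r, c + 1, m) : Node) ∉ diag μ
      rw [mem_diag_iff]
      omega

lemma exists_removable_above {μ : MultiPartition ℓ} (hcols : HCols h μ) {b : Node}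
    (hb : b ∈ diag μ) :
    ∃ q p : ℕ, RemD ℓ (diag μ) (b.1 + q, b.2.1 + p, b.2.2) ∧ b.2.1 + p ≤ h := by
  obtain ⟨r, c, m⟩ := b
  rw [mem_diag_iff] at hb
  obtain ⟨hr, hc1, hrow⟩ := hb
  have hex : ∃ j, μ.row m j < c := by
    obtain ⟨R, hR⟩ := μ.row_finite m
    exact ⟨R, by rw [hR R le_rfl]; omega⟩
  classical
  set R0 := Nat.find hex with hR0def
  have hP : μ.row m R0 < c := Nat.find_spec hex
  have hge : r ≤ R0 := by
    by_contra hlt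
    have h5 := row_antitone μ m (show R0 ≤ r - 1 by omega)
    omega
  have hprev : c ≤ μ.row m (R0 - 1) := by
    have h5 := Nat.find_min hex (show R0 - 1 < R0 by omega)
    omega
  set C := μ.row m (R0 - 1) with hCdef
  have hCh : C ≤ h := hcols m (R0 - 1)
  refine ⟨R0 - r, C - c, ?_, ?_⟩
  · show RemD ℓ (diag μ) (r + (R0 - r), c + (C - c), m)
    have e1 : r + (R0 - r) = R0 := by omega
    have e2 : c + (C - c) = C := by omega
    rw [e1, e2, remD_iff']
    refine ⟨by omega, by omega, by omega, by omega⟩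
  · show c + (C - c) ≤ h
    omega

lemma diag_no_left_diagonal {μ : MultiPartition ℓ} {b X : Node} (hb : b ∈ diag μ)
    (hX1 : 1 ≤ X.1)
    (hXr : (X.1, X.2.1 + 1, X.2.2) ∉ diag μ)
    (hm : b.2.2 = X.2.2) (hdiag : (b.1 : ℤ) - b.2.1 = (X.1 : ℤ) - X.2.1 - 1) :
    b.1 < X.1 := by
  obtain ⟨r, c, m⟩ := b
  rw [mem_diag_iff] at hb
  obtain ⟨hr, hc1, hrow⟩ := hb
  simp only at hm hdiag ⊢
  by_contra hge
  apply hXr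
  rw [mem_diag_iff, ← hm]
  have h5 : μ.row m (r - 1) ≤ μ.row m (X.1 - 1) :=
    row_antitone μ _ (by omega)
  exact ⟨hX1, by omega, by omega⟩

lemma diag_no_lower_diagonal {μ : MultiPartition ℓ} {b X : Node} (hb : b ∈ diag μ)
    (hXc : 1 ≤ X.2.1)
    (hXd : (X.1 + 1, X.2.1, X.2.2) ∉ diag μ)
    (hm : b.2.2 = X.2.2) (hdiag : (b.1 : ℤ) - b.2.1 = (X.1 : ℤ) - X.2.1 + 1) :
    b.1 ≤ X.1 := by
  obtain ⟨r, c, m⟩ := b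
  rw [mem_diag_iff] at hb
  obtain ⟨hr, hc1, hrow⟩ := hb
  simp only at hm hdiag ⊢
  by_contra hge
  apply hXd
  rw [mem_diag_iff, ← hm]
  have h5 : μ.row m (r - 1) ≤ μ.row m (X.1 + 1 - 1) :=
    row_antitone μ _ (by omega)
  exact ⟨by omega, hXc, by omega⟩

end Diag


section Claims

variable {e h ℓ n : ℕ} {κ : ℕ → ZMod e} {ε : ℝ}

lemma load_def' (ℓ : ℕ) (ε : ℝ) (r c m : ℕ) :
    load ℓ ε (r, c, m) = ((m:ℝ) + 1) + (ℓ:ℝ) * ((r:ℝ) - (c:ℝ)) + ((r:ℝ) + (c:ℝ)) * ε := rfl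

lemma thetaPos_def' (ℓ : ℕ) (r c m : ℕ) :
    thetaPos ℓ (r, c, m) = ((m:ℤ) + 1) + (ℓ:ℤ) * ((r:ℤ) - (c:ℤ)) := rfl

lemma res_def' (e : ℕ) (κ : ℕ → ZMod e) (r c m : ℕ) :
    res e κ (r, c, m) = κ m + (c : ZMod e) - (r : ZMod e) := rfl

lemma thetaPos_le_of_nodeDom {b b' : Node} (hd : NodeDom ℓ b b') :
    thetaPos ℓ b ≤ thetaPos ℓ b' := by
  rcases hd with h' | h'
  · exact le_of_lt h'
  · exact le_of_eq h'.1

lemma claimD (hh : 1 ≤ h) (hl : 1 ≤ ℓ) (he : h * ℓ < e)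
    (hadm : HAdmissible e h ℓ κ)
    (hε0 : 0 < ε) {μ : MultiPartition ℓ} (hμc : HCols h μ)
    {X : Node} (hXmem : X ∈ diag μ) {m : ℕ} (hm : m < ℓ)
    (hres : res e κ X = κ m) : ((m : ℝ) + 1) < load ℓ ε X := by
  obtain ⟨rX, cX, mX⟩ := X
  rw [mem_diag_iff] at hXmem
  obtain ⟨hr1, hc1, hrow⟩ := hXmem
  have hmX : mX < ℓ := comp_lt_of_mem_diag (lam := μ) (mem_diag_iff.mpr ⟨hr1, hc1, hrow⟩)
  have hch : cX ≤ h := le_trans hrow (hμc mX (rX - 1))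
  have hhe : h < e := by
    have : h ≤ h * ℓ := Nat.le_mul_of_pos_right h (by omega)
    omega
  rw [res_def'] at hres
  have hkey : 0 ≤ (mX : ℤ) - (m : ℤ) + (ℓ : ℤ) * ((rX : ℤ) - (cX : ℤ)) := by
    rcases lt_trichotomy ((rX : ℤ) - (cX : ℤ)) 0 with ht | ht | ht
    · exfalso
      set d : ℕ := cX - rX with hd
      have hd1 : 1 ≤ d := by omega
      have hd2 : d < h := by omega
      apply no_small_shift hh hhe hadm hmX hm hd1 hd2
      rw [← hres]
      have hc' : (cX : ZMod e) = (rX : ZMod e) + (d : ZMod e) := by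
        have hcd : cX = rX + d := by omega
        rw [hcd]; push_cast; ring
      rw [hc']; ring
    · have hmeq : m = mX := by
        apply kappa_inj hh hadm hm hmX
        rw [← hres]
        have hc' : (cX : ZMod e) = (rX : ZMod e) := by
          have hcd : cX = rX := by omega
          rw [hcd]
        rw [hc']; ring
      rw [hmeq, ht]
      simp
    · have h1 : (ℓ:ℤ) * 1 ≤ (ℓ:ℤ) * ((rX:ℤ) - (cX:ℤ)) :=
        mul_le_mul_of_nonneg_left (by omega) (by positivity)
      have hmZ : (m:ℤ) < (ℓ:ℤ) := by exact_mod_cast hm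
      have h0 : (0:ℤ) ≤ (mX:ℤ) := by positivity
      linarith
  rw [load_def']
  have h2 : (0:ℝ) ≤ (mX:ℝ) - (m:ℝ) + (ℓ:ℝ) * ((rX:ℝ) - (cX:ℝ)) := by exact_mod_cast hkey
  have hpos : 0 < ((rX:ℝ) + (cX:ℝ)) * ε := by
    have h3 : (1:ℝ) ≤ (rX:ℝ) := by exact_mod_cast hr1
    have hc0 : (0:ℝ) ≤ (cX:ℝ) := by positivity
    nlinarith
  linarith


lemma load_eq_thetaPos' (ℓ : ℕ) (ε : ℝ) (r c m : ℕ) :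
    load ℓ ε (r, c, m) = ((thetaPos ℓ (r, c, m) : ℤ) : ℝ) + ((r + c : ℕ) : ℝ) * ε :=
  load_eq_thetaPos ℓ ε (r, c, m)

lemma claimC (hh : 1 ≤ h) (hl : 1 ≤ ℓ) (he : h * ℓ < e)
    (hadm : HAdmissible e h ℓ κ) (hnorm : Normalized e h ℓ κ)
    (hε0 : 0 < ε) (hε1 : ε < 1 / (2 * ((n : ℝ) + 2)))
    {μ : MultiPartition ℓ} (hμ : size μ = n) (hμc : HCols h μ)
    {X : Node} (hX : RemD ℓ (diag μ) X)
    (hXleast : ∀ Y, RemD ℓ (diag μ) Y → Y ≠ X → NodeDom ℓ Y X)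
    {b : Node} (hb : b ∈ diag μ) (hres : res e κ b = res e κ X + 1) :
    load ℓ ε b < load ℓ ε X - (ℓ : ℝ) := by
  obtain ⟨rX, cX, mX⟩ := X
  obtain ⟨rb, cb, mb⟩ := b
  have hbmem := hb
  have hXmem : ((rX, cX, mX) : Node) ∈ diag μ := hX.1
  have hhe : h < e := by
    have : h ≤ h * ℓ := Nat.le_mul_of_pos_right h (by omega)
    omega
  haveI : NeZero e := ⟨by omega⟩
  have hmb : mb < ℓ := comp_lt_of_mem_diag hbmem
  have hmX : mX < ℓ := comp_lt_of_mem_diag hXmem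
  have hbb : rb + cb ≤ n + 1 := by
    have h0 := rc_le_size (lam := μ) hbmem; rw [hμ] at h0; exact h0
  have hXb : rX + cX ≤ n + 1 := by
    have h0 := rc_le_size (lam := μ) hXmem; rw [hμ] at h0; exact h0
  rw [mem_diag_iff] at hb hXmem
  obtain ⟨hrb1, hcb1, hrowb⟩ := hb
  obtain ⟨hrX1, hcX1, hrowX⟩ := hXmem
  obtain ⟨q, p, hvrem, hph⟩ := exists_removable_above hμc hbmem
  have hvrem' : RemD ℓ (diag μ) ((rb + q, cb + p, mb) : Node) := hvrem
  have hvmem : ((rb + q, cb + p, mb) : Node) ∈ diag μ := hvrem'.1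
  have hph' : cb + p ≤ h := hph
  have hvb : (rb + q) + (cb + p) ≤ n + 1 := by
    have h0 := rc_le_size (lam := μ) hvmem; rw [hμ] at h0; exact h0
  have Ev : load ℓ ε (rb + q, cb + p, mb)
      = load ℓ ε (rb, cb, mb) + (ℓ:ℝ) * ((q:ℝ) - (p:ℝ)) + ((q:ℝ) + (p:ℝ)) * ε := by
    rw [load_def', load_def']; push_cast; ring
  rw [res_def', res_def'] at hres
  by_cases hvX : ((rb + q, cb + p, mb) : Node) = ((rX, cX, mX) : Node)
  · -- v = X
    have h5 : res e κ ((rX, cX, mX) : Node)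
        = res e κ ((rb, cb, mb) : Node) + (p : ZMod e) - (q : ZMod e) := by
      rw [← hvX, res_def', res_def']; push_cast; ring
    rw [res_def', res_def'] at h5
    have hz : (((q:ℤ) - (p:ℤ) - 1 : ℤ) : ZMod e) = 0 := by
      push_cast
      linear_combination h5 + hres
    have hdvd := (ZMod.intCast_zmod_eq_zero_iff_dvd _ e).mp hz
    obtain ⟨k, hk⟩ := hdvd
    have hk0 : 0 ≤ k := by
      by_contra hkneg
      have h6 : (e:ℤ) * k ≤ (e:ℤ) * (-1) :=
        mul_le_mul_of_nonneg_left (by omega) (by positivity)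
      have h7 : (q:ℤ) - p - 1 ≤ -(e:ℤ) := by rw [hk]; linarith
      have hpZ : (p:ℤ) ≤ h - 1 := by omega
      have heZ : (h:ℤ) < e := by exact_mod_cast hhe
      have hq0 : (0:ℤ) ≤ (q:ℤ) := by positivity
      linarith
    have hq1 : (p:ℤ) + 1 ≤ (q:ℤ) := by
      have h7 : (0:ℤ) ≤ (e:ℤ) * k := mul_nonneg (by positivity) hk0
      have h8 : (0:ℤ) ≤ (q:ℤ) - p - 1 := by rw [hk]; linarith
      linarith
    have hLX : load ℓ ε ((rX, cX, mX) : Node) = load ℓ ε (rb + q, cb + p, mb) := by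
      rw [hvX]
    rw [hLX, Ev]
    have hq1' : (1:ℝ) ≤ (q:ℝ) - (p:ℝ) := by
      have h9 : (1:ℤ) ≤ (q:ℤ) - p := by omega
      exact_mod_cast h9
    have hlq : (ℓ:ℝ) * 1 ≤ (ℓ:ℝ) * ((q:ℝ) - p) :=
      mul_le_mul_of_nonneg_left hq1' (by positivity)
    have hεp : 0 < ((q:ℝ) + p) * ε := by
      have hq2 : (1:ℝ) ≤ (q:ℝ) := by exact_mod_cast (by omega : (1:ℤ) ≤ (q:ℤ))
      have hp0 : (0:ℝ) ≤ (p:ℝ) := by positivity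
      nlinarith
    have hl1 : (1:ℝ) ≤ (ℓ:ℝ) := by exact_mod_cast hl
    linarith
  · -- v ≠ X
    have hdom := hXleast _ hvrem' hvX
    have hload : load ℓ ε (rb + q, cb + p, mb) < load ℓ ε (rX, cX, mX) :=
      load_lt_of_nodeDom hε0 hε1 hvb hdom
    have hθ : thetaPos ℓ (rb + q, cb + p, mb) ≤ thetaPos ℓ (rX, cX, mX) :=
      thetaPos_le_of_nodeDom hdom
    by_cases hqp : p + 1 ≤ q
    · have hq1' : (1:ℝ) ≤ (q:ℝ) - (p:ℝ) := by
        have h9 : (1:ℤ) ≤ (q:ℤ) - p := by omega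
        exact_mod_cast h9
      have hlq : (ℓ:ℝ) * 1 ≤ (ℓ:ℝ) * ((q:ℝ) - p) :=
        mul_le_mul_of_nonneg_left hq1' (by positivity)
      have hε4 : 0 ≤ ((q:ℝ) + p) * ε := by positivity
      have hl1 : (1:ℝ) ≤ (ℓ:ℝ) := by exact_mod_cast hl
      linarith [Ev]
    · set g : ℕ := p + 1 - q with hgdef
      have hg1 : 1 ≤ g := by omega
      have hg2 : g ≤ h := by omega
      set D : ℤ := ((rX:ℤ) - (cX:ℤ)) - (((rb:ℤ) + (q:ℤ)) - ((cb:ℤ) + (p:ℤ))) with hDdef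
      have hgZ : (g:ℤ) = (p:ℤ) - q + 1 := by omega
      have hκv : κ mb = κ mX + (g : ZMod e) - ((D : ℤ) : ZMod e) := by
        have hgcast : ((g:ℕ) : ZMod e) = (((p:ℤ) - (q:ℤ) + 1 : ℤ) : ZMod e) := by
          rw [← hgZ]
          exact (Int.cast_natCast g).symm
        rw [hgcast, hDdef]
        push_cast
        linear_combination hres
      have hδ : 0 ≤ (mX:ℤ) - mb + (ℓ:ℤ) * D := by
        rw [thetaPos_def', thetaPos_def'] at hθ
        have hexp : (ℓ:ℤ) * D
            = (ℓ:ℤ)*((rX:ℤ)-(cX:ℤ)) - (ℓ:ℤ)*(((rb:ℤ)+(q:ℤ)) - ((cb:ℤ)+(p:ℤ))) := by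
          rw [hDdef]; ring
        push_cast at hθ
        linarith
      obtain ⟨hsp1, hsp2⟩ := spacing hh hl hhe hadm hnorm hmb hmX hg1 hg2 hκv hδ
      rcases eq_or_lt_of_le hsp1 with hEqδ | hGtδ
      · obtain ⟨hmbX, hDg⟩ := hsp2 hEqδ.symm
        have hdiageq : (rb:ℤ) - (cb:ℤ) = (rX:ℤ) - (cX:ℤ) - 1 := by
          rw [hDdef] at hDg
          omega
        have hrblt : rb < rX := by
          have h2' : ((rX, cX + 1, mX) : Node) ∉ diag μ := (remD_iff.mp hX).2.2
          exact diag_no_left_diagonal (X := ((rX, cX, mX) : Node)) hbmem hrX1 h2' hmbX hdiageq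
        have hrc : rb + cb < rX + cX := by omega
        have hθb : thetaPos ℓ (rb, cb, mb) = thetaPos ℓ (rX, cX, mX) - ℓ := by
          rw [thetaPos_def', thetaPos_def', hmbX]
          linear_combination (ℓ:ℤ) * hdiageq
        rw [load_eq_thetaPos', load_eq_thetaPos']
        have hc1R : ((thetaPos ℓ (rb, cb, mb) : ℤ) : ℝ)
            = ((thetaPos ℓ (rX, cX, mX) : ℤ) : ℝ) - (ℓ:ℝ) := by exact_mod_cast hθb
        rw [hc1R]
        have hεlt : ((rb + cb : ℕ):ℝ) * ε < ((rX + cX : ℕ):ℝ) * ε := by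
          apply mul_lt_mul_of_pos_right _ hε0
          exact_mod_cast hrc
        linarith
      · have hθδ : thetaPos ℓ (rX, cX, mX) - thetaPos ℓ (rb + q, cb + p, mb)
            = (mX:ℤ) - mb + (ℓ:ℤ) * D := by
          rw [thetaPos_def', thetaPos_def', hDdef]; push_cast; ring
        have hθv : (thetaPos ℓ (rb + q, cb + p, mb) : ℤ)
            ≤ thetaPos ℓ (rX, cX, mX) - (g:ℤ)*(ℓ:ℤ) - 1 := by linarith
        have hlv : load ℓ ε (rb + q, cb + p, mb)
            < ((thetaPos ℓ (rb + q, cb + p, mb) : ℤ):ℝ) + 1/2 := by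
          rw [load_eq_thetaPos']
          have := eps_lt_half hε0 hε1 (show (rb + q) + (cb + p) ≤ n + 1 from hvb)
          linarith
        have hθvR : ((thetaPos ℓ (rb + q, cb + p, mb) : ℤ):ℝ)
            ≤ ((thetaPos ℓ (rX, cX, mX) : ℤ):ℝ) - (g:ℝ)*(ℓ:ℝ) - 1 := by
          exact_mod_cast hθv
        have hLXe : load ℓ ε (rX, cX, mX)
            = ((thetaPos ℓ (rX, cX, mX) : ℤ):ℝ) + ((rX + cX : ℕ):ℝ) * ε :=
          load_eq_thetaPos' ℓ ε rX cX mX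
        have hXε : 0 ≤ ((rX + cX : ℕ):ℝ) * ε := by positivity
        have hgR : (g:ℝ) = (p:ℝ) + 1 - (q:ℝ) := by
          have h9 := congrArg (Int.cast : ℤ → ℝ) hgZ
          push_cast at h9
          linarith
        have hring : (ℓ:ℝ)*((q:ℝ) - (p:ℝ)) + (g:ℝ)*(ℓ:ℝ) = (ℓ:ℝ) := by
          rw [hgR]; ring
        have hεb : 0 ≤ ((q:ℝ) + (p:ℝ)) * ε := by positivity
        linarith [Ev]

lemma claimA (hh : 1 ≤ h) (hl : 1 ≤ ℓ) (he : h * ℓ < e)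
    (hadm : HAdmissible e h ℓ κ) (hnorm : Normalized e h ℓ κ)
    (hε0 : 0 < ε) (hε1 : ε < 1 / (2 * ((n : ℝ) + 2)))
    {μ : MultiPartition ℓ} (hμ : size μ = n) (hμc : HCols h μ)
    {X : Node} (hX : RemD ℓ (diag μ) X)
    (hXleast : ∀ Y, RemD ℓ (diag μ) Y → Y ≠ X → NodeDom ℓ Y X)
    {b : Node} (hb : b ∈ diag μ) (hres : res e κ b = res e κ X - 1) :
    load ℓ ε b < load ℓ ε X + (ℓ : ℝ) := by
  obtain ⟨rX, cX, mX⟩ := X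
  obtain ⟨rb, cb, mb⟩ := b
  have hbmem := hb
  have hXmem : ((rX, cX, mX) : Node) ∈ diag μ := hX.1
  have hhe : h < e := by
    have : h ≤ h * ℓ := Nat.le_mul_of_pos_right h (by omega)
    omega
  haveI : NeZero e := ⟨by omega⟩
  have hmb : mb < ℓ := comp_lt_of_mem_diag hbmem
  have hmX : mX < ℓ := comp_lt_of_mem_diag hXmem
  have hbb : rb + cb ≤ n + 1 := by
    have h0 := rc_le_size (lam := μ) hbmem; rw [hμ] at h0; exact h0
  have hXb : rX + cX ≤ n + 1 := by
    have h0 := rc_le_size (lam := μ) hXmem; rw [hμ] at h0; exact h0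
  rw [mem_diag_iff] at hb hXmem
  obtain ⟨hrb1, hcb1, hrowb⟩ := hb
  obtain ⟨hrX1, hcX1, hrowX⟩ := hXmem
  obtain ⟨q, p, hvrem, hph⟩ := exists_removable_above hμc hbmem
  have hvrem' : RemD ℓ (diag μ) ((rb + q, cb + p, mb) : Node) := hvrem
  have hvmem : ((rb + q, cb + p, mb) : Node) ∈ diag μ := hvrem'.1
  have hph' : cb + p ≤ h := hph
  have hvb : (rb + q) + (cb + p) ≤ n + 1 := by
    have h0 := rc_le_size (lam := μ) hvmem; rw [hμ] at h0; exact h0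
  have Ev : load ℓ ε (rb + q, cb + p, mb)
      = load ℓ ε (rb, cb, mb) + (ℓ:ℝ) * ((q:ℝ) - (p:ℝ)) + ((q:ℝ) + (p:ℝ)) * ε := by
    rw [load_def', load_def']; push_cast; ring
  rw [res_def', res_def'] at hres
  by_cases hvX : ((rb + q, cb + p, mb) : Node) = ((rX, cX, mX) : Node)
  · -- v = X
    have h5 : res e κ ((rX, cX, mX) : Node)
        = res e κ ((rb, cb, mb) : Node) + (p : ZMod e) - (q : ZMod e) := by
      rw [← hvX, res_def', res_def']; push_cast; ring
    rw [res_def', res_def'] at h5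
    have hz : (((p:ℤ) - (q:ℤ) - 1 : ℤ) : ZMod e) = 0 := by
      push_cast
      linear_combination - h5 - hres
    have hdvd := (ZMod.intCast_zmod_eq_zero_iff_dvd _ e).mp hz
    obtain ⟨k, hk⟩ := hdvd
    have hLX : load ℓ ε ((rX, cX, mX) : Node) = load ℓ ε (rb + q, cb + p, mb) := by
      rw [hvX]
    rw [hLX, Ev]
    have hl1 : (1:ℝ) ≤ (ℓ:ℝ) := by exact_mod_cast hl
    have hknp : k ≤ 0 := by
      by_contra hkpos
      have h6 : (e:ℤ) * 1 ≤ (e:ℤ) * k :=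
        mul_le_mul_of_nonneg_left (by omega) (by positivity)
      have h7 : (e:ℤ) ≤ (p:ℤ) - q - 1 := by rw [hk]; linarith
      have hpZ : (p:ℤ) ≤ h - 1 := by omega
      have heZ : (h:ℤ) < e := by exact_mod_cast hhe
      have hq0 : (0:ℤ) ≤ (q:ℤ) := by positivity
      linarith
    rcases eq_or_lt_of_le hknp with hk0 | hkneg
    · -- k = 0 : p = q + 1
      have hpq : (p:ℤ) = (q:ℤ) + 1 := by rw [hk0, mul_zero] at hk; omega
      have hεp : 0 < ((q:ℝ) + p) * ε := by
        have hp2 : (1:ℝ) ≤ (p:ℝ) := by exact_mod_cast (by omega : (1:ℤ) ≤ (p:ℤ))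
        have hq0 : (0:ℝ) ≤ (q:ℝ) := by positivity
        nlinarith
      have hqpR : (q:ℝ) - (p:ℝ) = -1 := by
        have h9 := congrArg (Int.cast : ℤ → ℝ) (show (q:ℤ) - p = -1 by omega)
        push_cast at h9
        linarith
      have hmul : (ℓ:ℝ) * ((q:ℝ) - (p:ℝ)) = -(ℓ:ℝ) := by rw [hqpR]; ring
      linarith
    · -- k ≤ -1 : q - p ≥ e - 1 ≥ 1
      have h6 : (e:ℤ) * k ≤ (e:ℤ) * (-1) :=
        mul_le_mul_of_nonneg_left (by omega) (by positivity)
      have heZ2 : (2:ℤ) ≤ (e:ℤ) := by exact_mod_cast (by omega : 2 ≤ e)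
      have hq1Z : (1:ℤ) ≤ (q:ℤ) - p := by
        have h7 : (p:ℤ) - q - 1 ≤ -(e:ℤ) := by rw [hk]; linarith
        linarith
      have hq1' : (1:ℝ) ≤ (q:ℝ) - (p:ℝ) := by
        exact_mod_cast hq1Z
      have hlq : (ℓ:ℝ) * 1 ≤ (ℓ:ℝ) * ((q:ℝ) - p) :=
        mul_le_mul_of_nonneg_left hq1' (by positivity)
      have hε4 : 0 ≤ ((q:ℝ) + p) * ε := by positivity
      linarith
  · -- v ≠ X
    have hdom := hXleast _ hvrem' hvX
    have hload : load ℓ ε (rb + q, cb + p, mb) < load ℓ ε (rX, cX, mX) :=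
      load_lt_of_nodeDom hε0 hε1 hvb hdom
    have hθ : thetaPos ℓ (rb + q, cb + p, mb) ≤ thetaPos ℓ (rX, cX, mX) :=
      thetaPos_le_of_nodeDom hdom
    have hl1 : (1:ℝ) ≤ (ℓ:ℝ) := by exact_mod_cast hl
    by_cases hqp : p ≤ q + 1
    · have hq1' : (-1:ℝ) ≤ (q:ℝ) - (p:ℝ) := by
        have h9 : (-1:ℤ) ≤ (q:ℤ) - p := by omega
        exact_mod_cast h9
      have hlq : (ℓ:ℝ) * (-1) ≤ (ℓ:ℝ) * ((q:ℝ) - p) :=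
        mul_le_mul_of_nonneg_left hq1' (by positivity)
      have hε4 : 0 ≤ ((q:ℝ) + p) * ε := by positivity
      linarith [Ev]
    · set g : ℕ := p - q - 1 with hgdef
      have hg1 : 1 ≤ g := by omega
      have hg2 : g ≤ h := by omega
      set D : ℤ := ((rX:ℤ) - (cX:ℤ)) - (((rb:ℤ) + (q:ℤ)) - ((cb:ℤ) + (p:ℤ))) with hDdef
      have hgZ : (g:ℤ) = (p:ℤ) - q - 1 := by omega
      have hκv : κ mb = κ mX + (g : ZMod e) - ((D : ℤ) : ZMod e) := by
        have hgcast : ((g:ℕ) : ZMod e) = (((p:ℤ) - (q:ℤ) - 1 : ℤ) : ZMod e) := by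
          rw [← hgZ]
          exact (Int.cast_natCast g).symm
        rw [hgcast, hDdef]
        push_cast
        linear_combination hres
      have hδ : 0 ≤ (mX:ℤ) - mb + (ℓ:ℤ) * D := by
        rw [thetaPos_def', thetaPos_def'] at hθ
        have hexp : (ℓ:ℤ) * D
            = (ℓ:ℤ)*((rX:ℤ)-(cX:ℤ)) - (ℓ:ℤ)*(((rb:ℤ)+(q:ℤ)) - ((cb:ℤ)+(p:ℤ))) := by
          rw [hDdef]; ring
        push_cast at hθ
        linarith
      obtain ⟨hsp1, hsp2⟩ := spacing hh hl hhe hadm hnorm hmb hmX hg1 hg2 hκv hδ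
      rcases eq_or_lt_of_le hsp1 with hEqδ | hGtδ
      · obtain ⟨hmbX, hDg⟩ := hsp2 hEqδ.symm
        have hdiageq : (rb:ℤ) - (cb:ℤ) = (rX:ℤ) - (cX:ℤ) + 1 := by
          rw [hDdef] at hDg
          omega
        have hrble : rb ≤ rX := by
          have h2' : ((rX + 1, cX, mX) : Node) ∉ diag μ := (remD_iff.mp hX).2.1
          exact diag_no_lower_diagonal (X := ((rX, cX, mX) : Node)) hbmem hcX1 h2' hmbX hdiageq
        have hrc : rb + cb < rX + cX := by omega
        have hθb : thetaPos ℓ (rb, cb, mb) = thetaPos ℓ (rX, cX, mX) + ℓ := by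
          rw [thetaPos_def', thetaPos_def', hmbX]
          linear_combination (ℓ:ℤ) * hdiageq
        rw [load_eq_thetaPos', load_eq_thetaPos']
        have hc1R : ((thetaPos ℓ (rb, cb, mb) : ℤ) : ℝ)
            = ((thetaPos ℓ (rX, cX, mX) : ℤ) : ℝ) + (ℓ:ℝ) := by exact_mod_cast hθb
        rw [hc1R]
        have hεlt : ((rb + cb : ℕ):ℝ) * ε < ((rX + cX : ℕ):ℝ) * ε := by
          apply mul_lt_mul_of_pos_right _ hε0
          exact_mod_cast hrc
        linarith
      · have hθδ : thetaPos ℓ (rX, cX, mX) - thetaPos ℓ (rb + q, cb + p, mb)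
            = (mX:ℤ) - mb + (ℓ:ℤ) * D := by
          rw [thetaPos_def', thetaPos_def', hDdef]; push_cast; ring
        have hθv : (thetaPos ℓ (rb + q, cb + p, mb) : ℤ)
            ≤ thetaPos ℓ (rX, cX, mX) - (g:ℤ)*(ℓ:ℤ) - 1 := by linarith
        have hlv : load ℓ ε (rb + q, cb + p, mb)
            < ((thetaPos ℓ (rb + q, cb + p, mb) : ℤ):ℝ) + 1/2 := by
          rw [load_eq_thetaPos']
          have := eps_lt_half hε0 hε1 (show (rb + q) + (cb + p) ≤ n + 1 from hvb)
          linarith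
        have hθvR : ((thetaPos ℓ (rb + q, cb + p, mb) : ℤ):ℝ)
            ≤ ((thetaPos ℓ (rX, cX, mX) : ℤ):ℝ) - (g:ℝ)*(ℓ:ℝ) - 1 := by
          exact_mod_cast hθv
        have hLXe : load ℓ ε (rX, cX, mX)
            = ((thetaPos ℓ (rX, cX, mX) : ℤ):ℝ) + ((rX + cX : ℕ):ℝ) * ε :=
          load_eq_thetaPos' ℓ ε rX cX mX
        have hXε : 0 ≤ ((rX + cX : ℕ):ℝ) * ε := by positivity
        have hgR : (g:ℝ) = (p:ℝ) - (q:ℝ) - 1 := by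
          have := congrArg (Int.cast : ℤ → ℝ) hgZ
          push_cast at this
          exact this
        have hring : (ℓ:ℝ)*((q:ℝ) - (p:ℝ)) + (g:ℝ)*(ℓ:ℝ) = -(ℓ:ℝ) := by
          rw [hgR]; ring
        have hεb : 0 ≤ ((q:ℝ) + (p:ℝ)) * ε := by positivity
        linarith [Ev]

end Claims


section MainAux

variable {e h ℓ n : ℕ} {κ : ℕ → ZMod e} {ε : ℝ}

lemma res_up (e : ℕ) (κ : ℕ → ZMod e) {b : Node} (h2 : 2 ≤ b.1) :
    res e κ (b.1 - 1, b.2.1, b.2.2) = res e κ b + 1 := by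
  obtain ⟨r, c, m⟩ := b
  have h2' : 2 ≤ r := h2
  rw [res_def']
  show _ = res e κ (r, c, m) + 1
  rw [res_def']
  have hc : ((r - 1 : ℕ) : ZMod e) = (r : ZMod e) - 1 := by
    have h4 : (((r - 1 : ℕ)) : ℤ) = (r : ℤ) - 1 := by omega
    have h5 := congrArg (Int.cast : ℤ → ZMod e) h4
    push_cast at h5
    exact h5
  rw [hc]; ring

lemma res_left (e : ℕ) (κ : ℕ → ZMod e) {b : Node} (h2 : 2 ≤ b.2.1) :
    res e κ (b.1, b.2.1 - 1, b.2.2) = res e κ b - 1 := by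
  obtain ⟨r, c, m⟩ := b
  have h2' : 2 ≤ c := h2
  rw [res_def']
  show _ = res e κ (r, c, m) - 1
  rw [res_def']
  have hc : ((c - 1 : ℕ) : ZMod e) = (c : ZMod e) - 1 := by
    have h4 : (((c - 1 : ℕ)) : ℤ) = (c : ℤ) - 1 := by omega
    have h5 := congrArg (Int.cast : ℤ → ZMod e) h4
    push_cast at h5
    exact h5
  rw [hc]; ring

lemma mem_up {lam : MultiPartition ℓ} {b : Node} (hb : b ∈ diag lam) (h2 : 2 ≤ b.1) :
    ((b.1 - 1, b.2.1, b.2.2) : Node) ∈ diag lam := by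
  obtain ⟨r, c, m⟩ := b
  have h2' : 2 ≤ r := h2
  rw [mem_diag_iff] at hb
  obtain ⟨h1', h2'', h3'⟩ := hb
  show ((r - 1, c, m) : Node) ∈ diag lam
  rw [mem_diag_iff]
  have h5 := row_antitone lam m (show r - 1 - 1 ≤ r - 1 by omega)
  exact ⟨by omega, h2'', by omega⟩

lemma mem_left {lam : MultiPartition ℓ} {b : Node} (hb : b ∈ diag lam) (h2 : 2 ≤ b.2.1) :
    ((b.1, b.2.1 - 1, b.2.2) : Node) ∈ diag lam := by
  obtain ⟨r, c, m⟩ := b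
  have h2' : 2 ≤ c := h2
  rw [mem_diag_iff] at hb
  obtain ⟨h1', h2'', h3'⟩ := hb
  show ((r, c - 1, m) : Node) ∈ diag lam
  rw [mem_diag_iff]
  exact ⟨h1', by omega, by omega⟩

end MainAux

theorem statement_0 (h ℓ e n : ℕ) (κ : ℕ → ZMod e) (ε : ℝ)
    (hh : 1 ≤ h) (hl : 1 ≤ ℓ) (he : h * ℓ < e)
    (hadm : HAdmissible e h ℓ κ) (hnorm : Normalized e h ℓ κ)
    (hn : 1 ≤ n) (hε0 : 0 < ε) (hε1 : ε < 1 / (2 * ((n : ℝ) + 2)))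
    (lam μ : MultiPartition ℓ)
    (hlam : size lam = n) (hlamc : HCols h lam) (hμ : size μ = n) (hμc : HCols h μ)
    (X : Node) (hX : RemD ℓ (diag μ) X)
    (hXleast : ∀ Y, RemD ℓ (diag μ) Y → Y ≠ X → NodeDom ℓ Y X) :
    Set.BijOn (fun p : Node × (Node → ℝ) => Function.update p.2 p.1 (load ℓ ε X))
      {p : Node × (Node → ℝ) | RemD ℓ (diag lam) p.1 ∧ res e κ p.1 = res e κ X ∧
        IsSStd e ℓ κ ε (diag lam \ {p.1}) (diag μ \ {X}) p.2}
      {T : Node → ℝ | IsSStd e ℓ κ ε (diag lam) (diag μ) T} := by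
  classical
  have hXmem : X ∈ diag μ := hX.1
  have hrcμ : ∀ b : Node, b ∈ diag μ → b.1 + b.2.1 ≤ n + 1 := by
    intro b hb
    have h0 := rc_le_size (lam := μ) hb
    rw [hμ] at h0
    exact h0
  have hinjμ : ∀ b ∈ diag μ, ∀ b' ∈ diag μ, load ℓ ε b = load ℓ ε b' → b = b' := by
    intro b hb b' hb' heq
    exact load_inj hε0 hε1 (hrcμ b hb) (hrcμ b' hb')
      (comp_lt_of_mem_diag hb) (comp_lt_of_mem_diag hb') heq
  have hLXnot : load ℓ ε X ∉ load ℓ ε '' (diag μ \ {X}) := by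
    rintro ⟨b', ⟨hb', hbne⟩, heq⟩
    exact hbne (by rw [Set.mem_singleton_iff]; exact hinjμ b' hb' X hXmem heq)
  have himg : load ℓ ε '' (diag μ \ {X}) = (load ℓ ε '' diag μ) \ {load ℓ ε X} := by
    ext y
    constructor
    · rintro ⟨b', ⟨hb', hbne⟩, rfl⟩
      refine ⟨⟨b', hb', rfl⟩, ?_⟩
      intro hy
      rw [Set.mem_singleton_iff] at hy
      exact hbne (by rw [Set.mem_singleton_iff]; exact hinjμ b' hb' X hXmem hy)
    · rintro ⟨⟨b', hb', rfl⟩, hne⟩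
      refine ⟨b', ⟨hb', ?_⟩, rfl⟩
      intro hb''
      rw [Set.mem_singleton_iff] at hb''
      exact hne (by rw [Set.mem_singleton_iff, hb''])
  have hC : ∀ b ∈ diag μ, res e κ b = res e κ X + 1 →
      load ℓ ε b < load ℓ ε X - (ℓ:ℝ) := fun b hb hr =>
    claimC hh hl he hadm hnorm hε0 hε1 hμ hμc hX hXleast hb hr
  have hA : ∀ b ∈ diag μ, res e κ b = res e κ X - 1 →
      load ℓ ε b < load ℓ ε X + (ℓ:ℝ) := fun b hb hr =>
    claimA hh hl he hadm hnorm hε0 hε1 hμ hμc hX hXleast hb hr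
  have hD : ∀ m : ℕ, m < ℓ → res e κ X = κ m → ((m:ℝ) + 1) < load ℓ ε X :=
    fun m hm hr => claimD hh hl he hadm hε0 hμc hXmem hm hr
  refine ⟨?_, ?_, ?_⟩
  · -- MapsTo
    rintro ⟨Y, T⟩ ⟨hYrem, hYres, hT⟩
    replace hYrem : RemD ℓ (diag lam) Y := hYrem
    replace hYres : res e κ Y = res e κ X := hYres
    replace hT : IsSStd e ℓ κ ε (diag lam \ {Y}) (diag μ \ {X}) T := hT
    obtain ⟨hTbij, hT1, hT2, hT3, hT5, hT0⟩ := hT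
    have hYmem : Y ∈ diag lam := hYrem.1
    obtain ⟨_, hYnb, hYnr⟩ := remD_iff.mp hYrem
    show IsSStd e ℓ κ ε (diag lam) (diag μ) (Function.update T Y (load ℓ ε X))
    refine ⟨⟨?_, ?_, ?_⟩, ?_, ?_, ?_, ?_, ?_⟩
    · -- MapsTo
      intro b hb
      by_cases hbY : b = Y
      · subst hbY
        rw [Function.update_self]
        exact ⟨X, hXmem, rfl⟩
      · rw [Function.update_of_ne hbY]
        obtain ⟨b', hb', heq'⟩ := hTbij.mapsTo ⟨hb, by simpa using hbY⟩
        exact ⟨b', hb'.1, heq'⟩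
    · -- InjOn
      intro b hb b2 hb2 heq
      by_cases hbY : b = Y <;> by_cases hb2Y : b2 = Y
      · rw [hbY, hb2Y]
      · exfalso
        rw [hbY, Function.update_self, Function.update_of_ne hb2Y] at heq
        exact hLXnot (by rw [heq]; exact hTbij.mapsTo ⟨hb2, by simpa using hb2Y⟩)
      · exfalso
        rw [hb2Y, Function.update_of_ne hbY, Function.update_self] at heq
        exact hLXnot (by rw [← heq]; exact hTbij.mapsTo ⟨hb, by simpa using hbY⟩)
      · rw [Function.update_of_ne hbY, Function.update_of_ne hb2Y] at heq
        exact hTbij.injOn ⟨hb, by simpa using hbY⟩ ⟨hb2, by simpa using hb2Y⟩ heq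
    · -- SurjOn
      rintro y ⟨b', hb', rfl⟩
      by_cases hb'X : b' = X
      · exact ⟨Y, hYmem, by rw [Function.update_self, hb'X]⟩
      · obtain ⟨b, hbm, hTb⟩ := hTbij.surjOn ⟨b', ⟨hb', by simpa using hb'X⟩, rfl⟩
        have hbY : b ≠ Y := by simpa using hbm.2
        exact ⟨b, hbm.1, by rw [Function.update_of_ne hbY]; exact hTb⟩
    · -- (i)
      intro b hb h11 h12
      by_cases hbY : b = Y
      · subst hbY
        obtain ⟨yr, yc, ym⟩ := b
        have h11' : yr = 1 := h11
        have h12' : yc = 1 := h12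
        subst h11'
        subst h12'
        rw [Function.update_self]
        apply hD ym (comp_lt_of_mem_diag hb)
        rw [← hYres, res_def']
        push_cast
        ring
      · rw [Function.update_of_ne hbY]
        exact hT1 b ⟨hb, by simpa using hbY⟩ h11 h12
    · -- (ii)
      intro b hb h2
      by_cases hbY : b = Y
      · subst hbY
        have hnbmem : ((b.1 - 1, b.2.1, b.2.2) : Node) ∈ diag lam := mem_up hb h2
        have hnbne : ((b.1 - 1, b.2.1, b.2.2) : Node) ≠ b := by
          intro hx
          have h9' := congrArg (fun z : Node => z.1) hx
          have h9 : b.1 - 1 = b.1 := h9'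
          omega
        rw [Function.update_self, Function.update_of_ne hnbne]
        obtain ⟨b', hb', heq'⟩ := hTbij.mapsTo ⟨hnbmem, by simpa using hnbne⟩
        have hresnb := hT5 _ ⟨hnbmem, by simpa using hnbne⟩ b' hb' heq'.symm
        have hresb' : res e κ b' = res e κ X + 1 := by
          rw [← hresnb, res_up e κ h2, hYres]
        have hcl := hC b' hb'.1 hresb'
        rw [← heq']
        linarith
      · have hnbY : ((b.1 - 1, b.2.1, b.2.2) : Node) ≠ Y := by
          intro hx
          apply hYnb
          have e1' := congrArg (fun z : Node => z.1) hx
          have e2' := congrArg (fun z : Node => z.2.1) hx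
          have e3' := congrArg (fun z : Node => z.2.2) hx
          have e1 : b.1 - 1 = Y.1 := e1'
          have e2 : b.2.1 = Y.2.1 := e2'
          have e3 : b.2.2 = Y.2.2 := e3'
          have e4 : b.1 = Y.1 + 1 := by omega
          have hb1 : b = ((Y.1 + 1, Y.2.1, Y.2.2) : Node) := by
            rw [← e4, ← e2, ← e3]
          rw [← hb1]
          exact hb
        rw [Function.update_of_ne hbY, Function.update_of_ne hnbY]
        exact hT2 b ⟨hb, by simpa using hbY⟩ h2
    · -- (iii)
      intro b hb h2
      by_cases hbY : b = Y
      · subst hbY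
        have hnbmem : ((b.1, b.2.1 - 1, b.2.2) : Node) ∈ diag lam := mem_left hb h2
        have hnbne : ((b.1, b.2.1 - 1, b.2.2) : Node) ≠ b := by
          intro hx
          have h9' := congrArg (fun z : Node => z.2.1) hx
          have h9 : b.2.1 - 1 = b.2.1 := h9'
          omega
        rw [Function.update_self, Function.update_of_ne hnbne]
        obtain ⟨b', hb', heq'⟩ := hTbij.mapsTo ⟨hnbmem, by simpa using hnbne⟩
        have hresnb := hT5 _ ⟨hnbmem, by simpa using hnbne⟩ b' hb' heq'.symm
        have hresb' : res e κ b' = res e κ X - 1 := by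
          rw [← hresnb, res_left e κ h2, hYres]
        have hcl := hA b' hb'.1 hresb'
        rw [← heq']
        linarith
      · have hnbY : ((b.1, b.2.1 - 1, b.2.2) : Node) ≠ Y := by
          intro hx
          apply hYnr
          have e1' := congrArg (fun z : Node => z.1) hx
          have e2' := congrArg (fun z : Node => z.2.1) hx
          have e3' := congrArg (fun z : Node => z.2.2) hx
          have e1 : b.1 = Y.1 := e1'
          have e2 : b.2.1 - 1 = Y.2.1 := e2'
          have e3 : b.2.2 = Y.2.2 := e3'
          have e4 : b.2.1 = Y.2.1 + 1 := by omega
          have hb1 : b = ((Y.1, Y.2.1 + 1, Y.2.2) : Node) := by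
            rw [← e1, ← e4, ← e3]
          rw [← hb1]
          exact hb
        rw [Function.update_of_ne hbY, Function.update_of_ne hnbY]
        exact hT3 b ⟨hb, by simpa using hbY⟩ h2
    · -- (5)
      intro b hb b' hb' heq
      by_cases hbY : b = Y
      · subst hbY
        rw [Function.update_self] at heq
        have hbX : b' = X := hinjμ b' hb' X hXmem heq.symm
        rw [hbX, hYres]
      · rw [Function.update_of_ne hbY] at heq
        by_cases hb'X : b' = X
        · exfalso
          subst hb'X
          have h9 := hTbij.mapsTo ⟨hb, by simpa using hbY⟩
          rw [heq] at h9
          exact hLXnot h9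
        · exact hT5 b ⟨hb, by simpa using hbY⟩ b' ⟨hb', by simpa using hb'X⟩ heq
    · -- (6)
      intro b hnb
      have hbY : b ≠ Y := fun hx => hnb (hx ▸ hYmem)
      rw [Function.update_of_ne hbY]
      exact hT0 b (fun hx => hnb hx.1)
  · -- InjOn
    rintro ⟨Y, T⟩ ⟨hYrem, hYres, hT⟩ ⟨Y', T'⟩ ⟨hY'rem, hY'res, hT'⟩ heq
    replace hT : IsSStd e ℓ κ ε (diag lam \ {Y}) (diag μ \ {X}) T := hT
    replace hT' : IsSStd e ℓ κ ε (diag lam \ {Y'}) (diag μ \ {X}) T' := hT'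
    replace hY'rem : RemD ℓ (diag lam) Y' := hY'rem
    have heq' : Function.update T Y (load ℓ ε X) = Function.update T' Y' (load ℓ ε X) := heq
    have hYY' : Y = Y' := by
      by_contra hne
      have h1 := congrFun heq' Y'
      rw [Function.update_self, Function.update_of_ne (fun hx => hne hx.symm)] at h1
      have hmem : Y' ∈ diag lam \ {Y} :=
        ⟨hY'rem.1, by simpa using (fun hx => hne hx.symm : Y' ≠ Y)⟩
      have h9 := hT.1.mapsTo hmem
      rw [h1] at h9
      exact hLXnot h9
    subst hYY'
    have hTT' : T = T' := by
      funext b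
      by_cases hbY : b = Y
      · subst hbY
        rw [hT.2.2.2.2.2 b (fun hx => hx.2 rfl), hT'.2.2.2.2.2 b (fun hx => hx.2 rfl)]
      · have h1 := congrFun heq' b
        rw [Function.update_of_ne hbY, Function.update_of_ne hbY] at h1
        exact h1
    rw [hTT']
  · -- SurjOn
    intro S hS
    obtain ⟨hSbij, hS1, hS2, hS3, hS5, hS0⟩ := hS
    obtain ⟨Y, hYmem, hSY⟩ := hSbij.surjOn ⟨X, hXmem, rfl⟩
    have hYres : res e κ Y = res e κ X := hS5 Y hYmem X hXmem hSY
    have hY1 : 1 ≤ Y.1 := hYmem.1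
    have hYc1 : 1 ≤ Y.2.1 := hYmem.2.1
    have hnotbelow : ((Y.1 + 1, Y.2.1, Y.2.2) : Node) ∉ diag lam := by
      intro hmem
      have hineq : S Y + (ℓ:ℝ) < S ((Y.1 + 1, Y.2.1, Y.2.2) : Node) :=
        hS2 _ hmem (by show 2 ≤ Y.1 + 1; omega)
      rw [hSY] at hineq
      obtain ⟨b'', hb'', heq''⟩ := hSbij.mapsTo hmem
      have hres'' : res e κ b'' = res e κ X - 1 := by
        have h9 := hS5 _ hmem b'' hb'' heq''.symm
        rw [← h9, res_down]
        have hYeta : res e κ (Y.1, Y.2.1, Y.2.2) = res e κ Y := rfl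
        rw [hYeta, hYres]
      have hcl := hA b'' hb'' hres''
      rw [heq''] at hcl
      linarith
    have hnotright : ((Y.1, Y.2.1 + 1, Y.2.2) : Node) ∉ diag lam := by
      intro hmem
      have hineq : S Y - (ℓ:ℝ) < S ((Y.1, Y.2.1 + 1, Y.2.2) : Node) :=
        hS3 _ hmem (by show 2 ≤ Y.2.1 + 1; omega)
      rw [hSY] at hineq
      obtain ⟨b'', hb'', heq''⟩ := hSbij.mapsTo hmem
      have hres'' : res e κ b'' = res e κ X + 1 := by
        have h9 := hS5 _ hmem b'' hb'' heq''.symm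
        rw [← h9, res_right]
        have hYeta : res e κ (Y.1, Y.2.1, Y.2.2) = res e κ Y := rfl
        rw [hYeta, hYres]
      have hcl := hC b'' hb'' hres''
      rw [heq''] at hcl
      linarith
    have hYrem : RemD ℓ (diag lam) Y :=
      remD_iff.mpr ⟨hYmem, hnotbelow, hnotright⟩
    refine ⟨(Y, Function.update S Y 0), ⟨hYrem, hYres, ?_⟩, ?_⟩
    · -- IsSStd for the restricted tableau
      show IsSStd e ℓ κ ε (diag lam \ {Y}) (diag μ \ {X}) (Function.update S Y 0)
      refine ⟨⟨?_, ?_, ?_⟩, ?_, ?_, ?_, ?_, ?_⟩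
      · rintro b ⟨hb, hbY⟩
        have hbY' : b ≠ Y := by simpa using hbY
        rw [Function.update_of_ne hbY', himg]
        refine ⟨hSbij.mapsTo hb, ?_⟩
        intro hx
        rw [Set.mem_singleton_iff, ← hSY] at hx
        exact hbY' (hSbij.injOn hb hYmem hx)
      · rintro b ⟨hb, hbY⟩ b2 ⟨hb2, hb2Y⟩ heq2
        rw [Function.update_of_ne (by simpa using hbY),
          Function.update_of_ne (by simpa using hb2Y)] at heq2
        exact hSbij.injOn hb hb2 heq2
      · intro y hy
        rw [himg] at hy
        obtain ⟨⟨b', hb', rfl⟩, hyne⟩ := hy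
        obtain ⟨b, hbm, hSb⟩ := hSbij.surjOn ⟨b', hb', rfl⟩
        have hbY : b ≠ Y := by
          intro hx
          apply hyne
          rw [Set.mem_singleton_iff, ← hSb, hx, hSY]
        exact ⟨b, ⟨hbm, by simpa using hbY⟩, by rw [Function.update_of_ne hbY]; exact hSb⟩
      · rintro b ⟨hb, hbY⟩ h11 h12
        rw [Function.update_of_ne (by simpa using hbY)]
        exact hS1 b hb h11 h12
      · rintro b ⟨hb, hbY⟩ h2
        have hbY' : b ≠ Y := by simpa using hbY
        have hnbY : ((b.1 - 1, b.2.1, b.2.2) : Node) ≠ Y := by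
          intro hx
          apply hnotbelow
          have e1' := congrArg (fun z : Node => z.1) hx
          have e2' := congrArg (fun z : Node => z.2.1) hx
          have e3' := congrArg (fun z : Node => z.2.2) hx
          have e1 : b.1 - 1 = Y.1 := e1'
          have e2 : b.2.1 = Y.2.1 := e2'
          have e3 : b.2.2 = Y.2.2 := e3'
          have e4 : b.1 = Y.1 + 1 := by omega
          have hb1 : b = ((Y.1 + 1, Y.2.1, Y.2.2) : Node) := by
            rw [← e4, ← e2, ← e3]
          rw [← hb1]
          exact hb
        rw [Function.update_of_ne hbY', Function.update_of_ne hnbY]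
        exact hS2 b hb h2
      · rintro b ⟨hb, hbY⟩ h2
        have hbY' : b ≠ Y := by simpa using hbY
        have hnbY : ((b.1, b.2.1 - 1, b.2.2) : Node) ≠ Y := by
          intro hx
          apply hnotright
          have e1' := congrArg (fun z : Node => z.1) hx
          have e2' := congrArg (fun z : Node => z.2.1) hx
          have e3' := congrArg (fun z : Node => z.2.2) hx
          have e1 : b.1 = Y.1 := e1'
          have e2 : b.2.1 - 1 = Y.2.1 := e2'
          have e3 : b.2.2 = Y.2.2 := e3'
          have e4 : b.2.1 = Y.2.1 + 1 := by omega
          have hb1 : b = ((Y.1, Y.2.1 + 1, Y.2.2) : Node) := by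
            rw [← e1, ← e4, ← e3]
          rw [← hb1]
          exact hb
        rw [Function.update_of_ne hbY', Function.update_of_ne hnbY]
        exact hS3 b hb h2
      · rintro b ⟨hb, hbY⟩ b' ⟨hb', hb'X⟩ heq2
        rw [Function.update_of_ne (by simpa using hbY)] at heq2
        exact hS5 b hb b' hb' heq2
      · intro b hnb
        by_cases hbY : b = Y
        · rw [hbY, Function.update_self]
        · rw [Function.update_of_ne hbY]
          apply hS0
          intro hx
          exact hnb ⟨hx, by simpa using hbY⟩
    · show Function.update (Function.update S Y 0) Y (load ℓ ε X) = S
      rw [Function.update_idem, ← hSY, Function.update_eq_self]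

end BC
end

section
/- Assume κ is h-admissible and normalized, and let μ ∈ 𝒫^ℓ_n(h). For a path s of length n, let det(s) be the path of length n + hℓ whose first hℓ steps are ε_1, ε_2, …, ε_{hℓ} (in this order) and whose remaining n steps are those of s. Then: (i) the distinguished path t^{det_h(μ)} equals det(t^μ); (ii) the map s ↦ det(s) is a bijection from {paths s of length n with s ∼ t^μ} onto {paths s' of length n + hℓ with s' ∼ t^{det_h(μ)}}; (iii) det shifts endpoints by det(s)(n+hℓ) = (1,1,…,1) + s(n); and (iv) det preserves degrees: deg(det(s)) = deg(s) for every path s with s ∼ t^μ. -/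
namespace BC

/-!
While `λ ≠ ∅`, the least dominant removable node of `det_h(λ)` is the least dominant removable
node of `λ` moved one row down, because the removable nodes `(1, h, m)` of the new top rows
θ-dominate every lower node; once `λ` is used up, the top rows are removed box by box from
`ε_{hℓ}` back to `ε_1`. This gives `t^{det_h(μ)} = det(t^μ)`.

Adding `(1, …, 1)` changes no pairing `⟨x + ρ, ε_i - ε_j⟩`, so the reflections and local degrees
of the last `n` steps of `det(s)` are those of `s`. The first `h ℓ` steps stay off all walls:
`ε_1 + ⋯ + ε_k` lies on a wall only if `κ_m + a ≡ κ_t + b + δ (mod e)` for `(m, a) < (t, b)`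
lexicographically and `δ ∈ {0, 1}`, which admissibility and normalization exclude. So these steps
have degree zero and no reflection acts on them, which makes `det` a bijection of `∼`-classes.
-/

open Set

def nodeKey (ℓ : ℕ) (b : Node) : ℤ ×ₗ ℕ := toLex (thetaPos ℓ b, b.1 + b.2.1)

theorem nodeDom_iff_nodeKey_lt {ℓ : ℕ} {b b' : Node} :
    NodeDom ℓ b b' ↔ nodeKey ℓ b < nodeKey ℓ b' := by
  rw [nodeKey, nodeKey, Prod.Lex.toLex_lt_toLex]
  rfl

theorem nodeKey_injOn (ℓ : ℕ) : {b : Node | b.2.2 < ℓ}.InjOn (nodeKey ℓ) := by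
  rintro ⟨r, c, m⟩ (hm : m < ℓ) ⟨r', c', m'⟩ (hm' : m' < ℓ) hkey
  simp only [nodeKey, thetaPos, EmbeddingLike.apply_eq_iff_eq, Prod.mk.injEq] at hkey
  obtain ⟨hθ, hsum⟩ := hkey
  have hdvd : (ℓ : ℤ) ∣ (m : ℤ) - m' := ⟨((r' : ℤ) - c') - (r - c), by linarith⟩
  have hmm : (m : ℤ) - m' = 0 := Int.eq_zero_of_abs_lt_dvd hdvd (by rw [abs_lt]; omega)
  have hdiff : (ℓ : ℤ) * (((r : ℤ) - c) - (r' - c')) = 0 := by linarith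
  rcases mul_eq_zero.1 hdiff with hℓ | hrc
  · omega
  · simp only [Prod.mk.injEq]
    omega

theorem leastRem_eq {ℓ : ℕ} {D : Set Node} {X : Node} (hX : IsLeastRem ℓ D X) :
    leastRem ℓ D = X := by
  have hE : IsLeastRem ℓ D (leastRem ℓ D) := Classical.epsilon_spec ⟨X, hX⟩
  by_contra hne
  exact lt_asymm (nodeDom_iff_nodeKey_lt.1 (hE.2 X hX.1 (Ne.symm hne)))
    (nodeDom_iff_nodeKey_lt.1 (hX.2 _ hE.1 hne))

namespace MultiPartition

variable {ℓ : ℕ} (lam : MultiPartition ℓ)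

theorem row_antitone (m : ℕ) : Antitone (lam.row m) :=
  antitone_nat_of_succ_le (lam.antitone m)

theorem comp_lt_of_mem_diag {b : Node} (hb : b ∈ diag lam) : b.2.2 < ℓ := by
  by_contra! hℓ
  have := lam.comp_bound b.2.2 hℓ (b.1 - 1)
  obtain ⟨-, h1, h2⟩ := hb
  omega

theorem diag_finite : (diag lam).Finite := by
  choose R hR using lam.row_finite
  refine ((Finset.range (∑ m ∈ Finset.range ℓ, R m + 1) ×ˢ
    Finset.range (∑ m ∈ Finset.range ℓ, lam.row m 0 + 1) ×ˢ
    Finset.range ℓ : Finset Node).finite_toSet).subset ?_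
  rintro ⟨r, c, m⟩ hb
  have hm : m < ℓ := lam.comp_lt_of_mem_diag hb
  obtain ⟨h1, h2, h3⟩ := hb
  simp only at h1 h2 h3
  have hRm : R m ≤ ∑ m ∈ Finset.range ℓ, R m :=
    Finset.single_le_sum (fun _ _ => Nat.zero_le _) (Finset.mem_range.2 hm)
  have hrow : lam.row m 0 ≤ ∑ m ∈ Finset.range ℓ, lam.row m 0 :=
    Finset.single_le_sum (f := fun m => lam.row m 0) (fun _ _ => Nat.zero_le _)
      (Finset.mem_range.2 hm)
  have hr : r - 1 < R m := by
    by_contra! hr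
    have := hR m (r - 1) hr
    omega
  have := lam.row_antitone m (Nat.zero_le (r - 1))
  simp only [Finset.coe_product, mem_prod, Finset.mem_coe, Finset.mem_range]
  omega

theorem diag_eq_biUnion {R : ℕ → ℕ} (hR : ∀ m r, R m ≤ r → lam.row m r = 0) :
    diag lam = ⋃ m ∈ Iio ℓ, ⋃ r ∈ Iio (R m), (fun c => (r + 1, c, m)) '' Icc 1 (lam.row m r) := by
  ext ⟨r, c, m⟩
  simp only [diag, mem_ofPred_eq, mem_iUnion, mem_Iio, mem_image, mem_Icc, Prod.mk.injEq,
    exists_prop]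
  constructor
  · rintro ⟨h1, h2, h3⟩
    have hm := lam.comp_lt_of_mem_diag (b := (r, c, m)) ⟨h1, h2, h3⟩
    refine ⟨m, hm, r - 1, ?_, c, ⟨h2, h3⟩, by omega, rfl, rfl⟩
    by_contra! hr
    have := hR m (r - 1) hr
    omega
  · rintro ⟨m, -, r', -, c, ⟨h2, h3⟩, rfl, rfl, rfl⟩
    exact ⟨by omega, h2, by simpa using h3⟩

theorem ncard_diag : (diag lam).ncard = size lam := by
  choose R hR using lam.row_finite
  have hsupp {f : ℕ → ℕ} {s : Set ℕ} (hf : ∀ i ∉ s, f i = 0) : ∑ᶠ i ∈ s, f i = ∑ᶠ i, f i := by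
    rw [finsum_mem_def, indicator_eq_self.2 fun i hi => by_contra fun hs => hi (hf i hs)]
  have hbox (m r : ℕ) : ((fun c => (r + 1, c, m)) '' Icc 1 (lam.row m r)).ncard = lam.row m r := by
    rw [ncard_image_of_injective _ fun c c' hcc => by simpa using hcc, ncard_Icc_nat,
      Nat.add_sub_cancel]
  have hrow (m : ℕ) :
      (⋃ r ∈ Iio (R m), (fun c => (r + 1, c, m)) '' Icc 1 (lam.row m r)).ncard =
        ∑ᶠ r, lam.row m r := by
    rw [(finite_Iio _).ncard_biUnion (fun r _ => (finite_Icc _ _).image _)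
      (fun r _ r' _ hrr => disjoint_left.2 fun b hb hb' => ?_)]
    · rw [finsum_mem_congr rfl fun r _ => hbox m r]
      exact hsupp fun r hr => hR m r (not_lt.1 hr)
    · obtain ⟨c, -, rfl⟩ := hb
      obtain ⟨c', -, hc'⟩ := hb'
      simp only [Prod.mk.injEq] at hc'
      omega
  rw [lam.diag_eq_biUnion hR, (finite_Iio ℓ).ncard_biUnion
    (fun m _ => (finite_Iio _).biUnion fun r _ => (finite_Icc _ _).image _)
    (fun m _ m' _ hmm => disjoint_left.2 fun b hb hb' => ?_)]
  · rw [finsum_mem_congr rfl fun m _ => hrow m]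
    exact hsupp fun m hm => finsum_eq_zero_of_forall_eq_zero (lam.comp_bound m (not_lt.1 hm))
  · simp only [mem_iUnion, mem_image] at hb hb'
    obtain ⟨r, -, c, -, rfl⟩ := hb
    obtain ⟨r', -, c', -, hc'⟩ := hb'
    simp only [Prod.mk.injEq] at hc'
    omega

def shortenRow (m R : ℕ) (hlt : lam.row m (R + 1) < lam.row m R) : MultiPartition ℓ where
  row m' r := if m' = m ∧ r = R then lam.row m R - 1 else lam.row m' r
  antitone m' r := by
    have := lam.antitone m' r
    have := lam.antitone m' (r - 1)
    split_ifs with h1 h2 h2 <;> grind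
  comp_bound m' hm' r := by
    have := lam.comp_bound m' hm'
    split_ifs with h1
    · obtain ⟨rfl, rfl⟩ := h1
      simp [this]
    · exact this r
  row_finite m' := by
    obtain ⟨R', hR'⟩ := lam.row_finite m'
    exact ⟨R' + R + 1, fun r hr => by rw [if_neg (by omega)]; exact hR' r (by omega)⟩

theorem diag_shortenRow (m R : ℕ) (hlt : lam.row m (R + 1) < lam.row m R) :
    diag (lam.shortenRow m R hlt) = diag lam \ {(R + 1, lam.row m R, m)} := by
  ext ⟨r, c, m'⟩
  simp only [diag, shortenRow, mem_ofPred_eq, mem_sdiff, mem_singleton_iff, Prod.mk.injEq]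
  split_ifs with h <;> grind

theorem exists_remD (hne : (diag lam).Nonempty) : ∃ X, RemD ℓ (diag lam) X := by
  obtain ⟨⟨r, c, m⟩, ⟨h1, h2, h3⟩, hmax⟩ :=
    exists_max_image _ (fun b : Node => b.1 + b.2.1) lam.diag_finite hne
  simp only at h1 h2 h3
  have hc : lam.row m (r - 1) = c := by
    by_contra hc
    have := hmax (r, c + 1, m) ⟨h1, by simp, by simp only; omega⟩
    simp only at this
    omega
  have hlt : lam.row m (r - 1 + 1) < lam.row m (r - 1) := by
    by_contra! hlt
    have := hmax (r + 1, c, m) ⟨by simp, h2, by simp only; grind⟩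
    simp only at this
    omega
  refine ⟨(r, c, m), ⟨h1, h2, h3⟩, lam.shortenRow m (r - 1) hlt, ?_⟩
  rw [diag_shortenRow, hc, Nat.sub_add_cancel h1]

theorem exists_isLeastRem (hne : (diag lam).Nonempty) : ∃ X, IsLeastRem ℓ (diag lam) X := by
  have hfin : {Y | RemD ℓ (diag lam) Y}.Finite := lam.diag_finite.subset fun Y hY => hY.1
  obtain ⟨X, hX, hmax⟩ := exists_max_image _ (nodeKey ℓ) hfin (lam.exists_remD hne)
  refine ⟨X, hX, fun Y hY hYX => nodeDom_iff_nodeKey_lt.2 ((hmax Y hY).lt_of_ne fun hkey => ?_)⟩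
  exact hYX (nodeKey_injOn ℓ (lam.comp_lt_of_mem_diag hY.1) (lam.comp_lt_of_mem_diag hX.1) hkey)

end MultiPartition

theorem RemD.succ_col_notMem {ℓ : ℕ} {D : Set Node} {r c m : ℕ} (hb : RemD ℓ D (r, c, m))
    (hc : 1 ≤ c) : (r, c + 1, m) ∉ D := by
  intro hmem
  obtain ⟨-, ν, hν⟩ := hb
  obtain ⟨h1, -, h3⟩ : (r, c + 1, m) ∈ diag ν := hν ▸ ⟨hmem, by simp⟩
  have hleft : (r, c, m) ∈ diag ν := ⟨h1, hc, by simp only at h3 ⊢; omega⟩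
  rw [hν] at hleft
  exact hleft.2 rfl

theorem isLeastRem_leastRem {ℓ : ℕ} {D : Set Node} (hD : IsDiag ℓ D) (hne : D.Nonempty) :
    IsLeastRem ℓ D (leastRem ℓ D) := by
  obtain ⟨lam, rfl⟩ := hD
  obtain ⟨X, hX⟩ := lam.exists_isLeastRem hne
  rwa [leastRem_eq hX]

section PDiag

variable {ℓ : ℕ}

theorem PDiag_add (D : Set Node) (j i : ℕ) : PDiag ℓ D (j + i) = PDiag ℓ (PDiag ℓ D j) i := by
  induction i with
  | zero => rfl
  | succ i ih => rw [← add_assoc, PDiag, ih, PDiag]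

theorem PDiag_subset (D : Set Node) (j : ℕ) : PDiag ℓ D j ⊆ D := by
  induction j with
  | zero => exact subset_rfl
  | succ j ih => exact sdiff_subset.trans ih

theorem isDiag_PDiag {D : Set Node} (hD : IsDiag ℓ D) {j : ℕ} (hj : j ≤ D.ncard) :
    IsDiag ℓ (PDiag ℓ D j) ∧ (PDiag ℓ D j).ncard = D.ncard - j := by
  induction j with
  | zero => exact ⟨hD, rfl⟩
  | succ j ih =>
    obtain ⟨hDj, hcard⟩ := ih (by omega)
    have hX := isLeastRem_leastRem hDj (nonempty_of_ncard_ne_zero (by omega))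
    exact ⟨hX.1.2, by rw [PDiag, ncard_sdiff_singleton_of_mem hX.1.1, hcard]; omega⟩

theorem isLeastRem_PDiag (lam : MultiPartition ℓ) {j : ℕ} (hj : j < (diag lam).ncard) :
    IsLeastRem ℓ (PDiag ℓ (diag lam) j) (leastRem ℓ (PDiag ℓ (diag lam) j)) := by
  obtain ⟨hDj, hcard⟩ := isDiag_PDiag ⟨lam, rfl⟩ hj.le
  exact isLeastRem_leastRem hDj (nonempty_of_ncard_ne_zero (by omega))

end PDiag

section Det

variable {h ℓ : ℕ}

def shiftDown (b : Node) : Node := (b.1 + 1, b.2.1, b.2.2)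

theorem shiftDown_injective : Function.Injective shiftDown := by
  rintro ⟨r, c, m⟩ ⟨r', c', m'⟩ hrr
  simp only [shiftDown, Prod.mk.injEq] at hrr ⊢
  omega

theorem NodeDom.shiftDown {b b' : Node} (hd : NodeDom ℓ b b') :
    NodeDom ℓ (shiftDown b) (shiftDown b') := by
  have hθ (b : Node) : thetaPos ℓ (BC.shiftDown b) = thetaPos ℓ b + ℓ := by
    simp only [thetaPos, BC.shiftDown]
    push_cast
    ring
  unfold NodeDom at hd ⊢
  rw [hθ, hθ]
  simp only [BC.shiftDown]
  omega

theorem HCols.mono {lam lam' : MultiPartition ℓ} (hc : HCols h lam)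
    (hsub : diag lam' ⊆ diag lam) : HCols h lam' := by
  intro m r
  by_contra! hlt
  have hmem : (r + 1, lam'.row m r, m) ∈ diag lam' := ⟨by simp, by simp only; omega, by simp⟩
  exact absurd ((hsub hmem).2.2.trans (hc m r)) (by simp only; omega)

def dropFirstRow (ν : MultiPartition ℓ) : MultiPartition ℓ where
  row m r := ν.row m (r + 1)
  antitone m r := ν.antitone m (r + 1)
  comp_bound m hm r := ν.comp_bound m hm (r + 1)
  row_finite m := by
    obtain ⟨R, hR⟩ := ν.row_finite m
    exact ⟨R, fun r hr => hR (r + 1) (by omega)⟩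

theorem diag_dropFirstRow (ν : MultiPartition ℓ) :
    diag (dropFirstRow ν) = {b | 1 ≤ b.1} ∩ shiftDown ⁻¹' diag ν := by
  ext ⟨r, c, m⟩
  simp only [diag, dropFirstRow, shiftDown, mem_inter_iff, mem_preimage, mem_ofPred_eq]
  constructor
  · rintro ⟨h1, h2, h3⟩
    exact ⟨h1, by omega, h2, by rwa [Nat.sub_add_cancel h1] at h3⟩
  · rintro ⟨h1, -, h2, h3⟩
    exact ⟨h1, h2, by rwa [Nat.sub_add_cancel h1]⟩

def topRow (h ℓ K : ℕ) : MultiPartition ℓ where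
  row m r := if r = 0 ∧ m < ℓ then min h (K - h * m) else 0
  antitone m r := by
    rw [if_neg (by omega)]
    exact Nat.zero_le _
  comp_bound m hm r := by rw [if_neg (by omega)]
  row_finite m := ⟨1, fun r hr => by rw [if_neg (by omega)]⟩

theorem mem_diag_topRow {K : ℕ} {b : Node} :
    b ∈ diag (topRow h ℓ K) ↔
      b.1 = 1 ∧ 1 ≤ b.2.1 ∧ b.2.1 ≤ h ∧ b.2.2 < ℓ ∧ h * b.2.2 + b.2.1 ≤ K := by
  obtain ⟨r, c, m⟩ := b
  simp only [diag, topRow, mem_ofPred_eq]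
  split_ifs with hr <;> grind

theorem diag_detMP (lam : MultiPartition ℓ) (hc : HCols h lam) :
    diag (detMP h lam hc) = diag (topRow h ℓ (h * ℓ)) ∪ shiftDown '' diag lam := by
  ext ⟨_ | r, c, m⟩
  · simp [diag, shiftDown]
  rw [mem_union, mem_diag_topRow, show (r + 1, c, m) = shiftDown (r, c, m) from rfl,
    shiftDown_injective.mem_set_image]
  simp only [diag, detMP, shiftDown, mem_ofPred_eq, Nat.add_sub_cancel]
  by_cases hm : m < ℓ
  · have hmul : h * m + h ≤ h * ℓ := by nlinarith
    split_ifs <;> omega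
  · have := lam.comp_bound m (not_lt.1 hm) (r - 1)
    rw [if_neg hm]
    omega

theorem union_shiftDown_sdiff {K : ℕ} (D : Set Node) {X : Node} (hX : 1 ≤ X.1) :
    (diag (topRow h ℓ K) ∪ shiftDown '' D) \ {shiftDown X} =
      diag (topRow h ℓ K) ∪ shiftDown '' (D \ {X}) := by
  rw [image_sdiff shiftDown_injective, image_singleton, union_sdiff_distrib,
    sdiff_singleton_eq_self fun hmem => by
      have := (mem_diag_topRow.1 hmem).1
      simp only [shiftDown] at this
      omega]

theorem RemD.nodeDom_shiftDown_of_mem_topRow {lam : MultiPartition ℓ} (hc : HCols h lam)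
    {Y : Node} (hY : RemD ℓ (diag (detMP h lam hc)) Y) (hYT : Y ∈ diag (topRow h ℓ (h * ℓ)))
    {b : Node} (hb : b ∈ diag lam) : NodeDom ℓ Y (shiftDown b) := by
  obtain ⟨r, c, m⟩ := Y
  obtain ⟨hr, hc1, hch, hm, -⟩ := mem_diag_topRow.1 hYT
  simp only at hr hc1 hch hm
  subst hr
  have hcol : c = h := by
    by_contra hch'
    refine hY.succ_col_notMem hc1 ?_
    rw [diag_detMP]
    have hmul : h * m + h ≤ h * ℓ := by nlinarith
    exact Or.inl (mem_diag_topRow.2 ⟨rfl, by simp, by simp only; omega, hm, by simp only; omega⟩)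
  obtain ⟨rb, cb, mb⟩ := b
  have hrb : 1 ≤ rb := hb.1
  have hcb : cb ≤ h := hb.2.2.trans (hc _ _)
  -- `thetaPos ℓ (1, h, m) ≤ ℓ (2 - h) < thetaPos ℓ (shiftDown b)` as `2 ≤ rb + 1` and `cb ≤ h`
  left
  simp only [thetaPos, shiftDown]
  push_cast
  nlinarith

theorem RemD.of_shiftDown {lam : MultiPartition ℓ} (hc : HCols h lam) {Y : Node}
    (hY : Y ∈ diag lam) (hrem : RemD ℓ (diag (detMP h lam hc)) (shiftDown Y)) :
    RemD ℓ (diag lam) Y := by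
  obtain ⟨ν, hν⟩ := hrem.2
  refine ⟨hY, dropFirstRow ν, ?_⟩
  rw [diag_dropFirstRow, hν, diag_detMP]
  ext b
  simp only [mem_inter_iff, mem_preimage, mem_sdiff, mem_union, mem_singleton_iff,
    shiftDown_injective.mem_set_image, shiftDown_injective.eq_iff, mem_ofPred_eq]
  constructor
  · rintro ⟨h1, hT | hb, hne⟩
    · have := (mem_diag_topRow.1 hT).1
      simp only [shiftDown] at this
      omega
    · exact ⟨hb, hne⟩
  · rintro ⟨hb, hne⟩
    exact ⟨hb.1, Or.inr hb, hne⟩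

theorem isLeastRem_detMP {lam : MultiPartition ℓ} (hc : HCols h lam) {X : Node}
    (hX : IsLeastRem ℓ (diag lam) X) :
    IsLeastRem ℓ (diag (detMP h lam hc)) (shiftDown X) := by
  obtain ⟨⟨hXmem, lam', hlam'⟩, hleast⟩ := hX
  have hc' : HCols h lam' := hc.mono (hlam' ▸ sdiff_subset)
  refine ⟨⟨?_, detMP h lam' hc', ?_⟩, fun Y hY hne => ?_⟩
  · rw [diag_detMP]
    exact Or.inr ⟨X, hXmem, rfl⟩
  · rw [diag_detMP, diag_detMP, hlam', union_shiftDown_sdiff _ hXmem.1]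
  have hYmem := hY.1
  rw [diag_detMP] at hYmem
  rcases hYmem with hYT | ⟨Y₀, hY₀, rfl⟩
  · exact hY.nodeDom_shiftDown_of_mem_topRow hc hYT hXmem
  · exact (hleast Y₀ (hY.of_shiftDown hc hY₀) fun hYX => hne (hYX ▸ rfl)).shiftDown

theorem diag_topRow_succ_sdiff (hh : 0 < h) (K : ℕ) :
    diag (topRow h ℓ (K + 1)) \ {(1, K % h + 1, K / h)} = diag (topRow h ℓ K) := by
  ext ⟨r, c, m⟩
  simp only [mem_sdiff, mem_singleton_iff, mem_diag_topRow, Prod.mk.injEq]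
  have hunique := (Nat.div_mod_unique (a := K) (d := m) (c := c - 1) hh).2
  have hdm := Nat.div_add_mod K h
  grind

theorem isLeastRem_topRow {K : ℕ} (hK : K < h * ℓ) :
    IsLeastRem ℓ (diag (topRow h ℓ (K + 1))) (1, K % h + 1, K / h) := by
  have hh : 0 < h := Nat.pos_of_ne_zero fun h0 => by simp [h0] at hK
  have hdm := Nat.div_add_mod K h
  have hmod := Nat.mod_lt K hh
  have hXmem : ((1 : ℕ), K % h + 1, K / h) ∈ diag (topRow h ℓ (K + 1)) :=
    mem_diag_topRow.2 ⟨rfl, by simp, by simp only; omega, Nat.div_lt_of_lt_mul hK,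
      by simp only; omega⟩
  refine ⟨⟨hXmem, topRow h ℓ K, (diag_topRow_succ_sdiff hh K).symm⟩, ?_⟩
  rintro ⟨r, c, m⟩ hY hne
  obtain ⟨hr, hc1, hch, hm, hle⟩ := mem_diag_topRow.1 hY.1
  simp only at hr hc1 hch hm hle
  subst hr
  have hlt : h * m + c ≤ K := by
    by_contra hlt
    obtain ⟨hq, hr⟩ := (Nat.div_mod_unique (a := K) (d := m) (c := c - 1) hh).2
      ⟨by omega, by omega⟩
    exact hne (by simp only [Prod.mk.injEq, true_and]; omega)
  have hcol : c = h := by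
    by_contra hch'
    exact hY.succ_col_notMem hc1 (mem_diag_topRow.2 ⟨rfl, by simp, by simp only; omega, hm,
      by simp only; omega⟩)
  have hmK : m < K / h := Nat.lt_of_mul_lt_mul_left (a := h) (by omega)
  left
  simp only [thetaPos]
  push_cast
  nlinarith

theorem PDiag_topRow {K : ℕ} (hK : K ≤ h * ℓ) {i : ℕ} (hi : i ≤ K) :
    PDiag ℓ (diag (topRow h ℓ K)) i = diag (topRow h ℓ (K - i)) := by
  induction i with
  | zero => rfl
  | succ i ih =>
    have hh : 0 < h := Nat.pos_of_ne_zero fun h0 => by simp [h0] at hK; omega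
    rw [PDiag, ih (by omega), show K - i = K - (i + 1) + 1 by omega,
      leastRem_eq (isLeastRem_topRow (by omega)), diag_topRow_succ_sdiff hh]

end Det

section DistinguishedPath

variable {h ℓ n : ℕ} {μ : MultiPartition ℓ}

theorem leastRem_union_PDiag (hc : HCols h μ) {j : ℕ} (hj : j < (diag μ).ncard) :
    leastRem ℓ (diag (topRow h ℓ (h * ℓ)) ∪ shiftDown '' PDiag ℓ (diag μ) j) =
      shiftDown (leastRem ℓ (PDiag ℓ (diag μ) j)) := by
  obtain ⟨lam, hlam⟩ := (isDiag_PDiag ⟨μ, rfl⟩ hj.le).1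
  have hcl : HCols h lam := hc.mono (hlam ▸ PDiag_subset _ _)
  have hX := isLeastRem_PDiag μ hj
  rw [← hlam] at hX ⊢
  rw [← diag_detMP lam hcl]
  exact leastRem_eq (isLeastRem_detMP hcl hX)

theorem PDiag_detMP (hc : HCols h μ) {j : ℕ} (hj : j ≤ (diag μ).ncard) :
    PDiag ℓ (diag (detMP h μ hc)) j =
      diag (topRow h ℓ (h * ℓ)) ∪ shiftDown '' PDiag ℓ (diag μ) j := by
  induction j with
  | zero => exact diag_detMP μ hc
  | succ j ih =>
    have hX := isLeastRem_PDiag μ (j := j) (by omega)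
    rw [PDiag, ih (by omega), leastRem_union_PDiag hc (by omega),
      union_shiftDown_sdiff _ (PDiag_subset _ _ hX.1.1).1, PDiag]

theorem PDiag_ncard_diag : PDiag ℓ (diag μ) (diag μ).ncard = ∅ := by
  have hcard := (isDiag_PDiag ⟨μ, rfl⟩ le_rfl).2
  rwa [Nat.sub_self, ncard_eq_zero (μ.diag_finite.subset (PDiag_subset _ _))] at hcard

theorem isPath_tPath (hc : HCols h μ) (hn : (diag μ).ncard = n) :
    IsPath (h * ℓ) n (tPath h ℓ n μ) := by
  refine ⟨fun k hk => ?_, fun k hk => by simp [tPath, not_lt.2 hk]⟩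
  have hX := PDiag_subset _ _ (isLeastRem_PDiag μ (j := n - 1 - k) (by omega)).1.1
  have hm := μ.comp_lt_of_mem_diag hX
  have hcol := hX.2.2.trans (hc _ _)
  have hmul : h * ((leastRem ℓ (PDiag ℓ (diag μ) (n - 1 - k))).2.2 + 1) ≤ h * ℓ :=
    Nat.mul_le_mul_left h hm
  simp only [tPath, if_pos hk]
  rw [mul_add, mul_one] at hmul
  have := hX.2.1
  omega

theorem tPath_detMP (hc : HCols h μ) (hn : (diag μ).ncard = n) :
    tPath h ℓ (n + h * ℓ) (detMP h μ hc) = detPath (h * ℓ) n (tPath h ℓ n μ) := by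
  funext k
  simp only [tPath, detPath]
  by_cases hk : k < h * ℓ
  · -- step `k` removes the top-row box with index `h * m + (c - 1) = k`
    have hK := PDiag_topRow (h := h) (ℓ := ℓ) le_rfl (i := h * ℓ - 1 - k) (by omega)
    rw [if_pos (by omega), if_pos hk, show n + h * ℓ - 1 - k = n + (h * ℓ - 1 - k) by omega,
      PDiag_add, PDiag_detMP hc hn.ge, ← hn, PDiag_ncard_diag, image_empty, union_empty, hK,
      show h * ℓ - (h * ℓ - 1 - k) = k + 1 by omega, leastRem_eq (isLeastRem_topRow hk)]
    have := Nat.div_add_mod k h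
    simp only [Nat.add_sub_cancel]
    omega
  · by_cases hk' : k < n + h * ℓ
    · rw [if_pos hk', if_neg hk, if_pos (by omega), if_pos (by omega),
        show n + h * ℓ - 1 - k = n - 1 - (k - h * ℓ) by omega, PDiag_detMP hc (by omega),
        leastRem_union_PDiag hc (by omega)]
      rfl
    · rw [if_neg hk', if_neg hk, if_neg (by omega)]

end DistinguishedPath

section Walls

variable {e h ℓ : ℕ} {κ : ℕ → ZMod e}

theorem HAdmissible.eq_of_add_eq (hadm : HAdmissible e h ℓ κ) (he : h < e) {m t a b : ℕ}
    (hm : m < ℓ) (ht : t < ℓ) (ha : a < h) (hb : b < h) (heq : κ m + a = κ t + b) :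
    m = t ∧ a = b := by
  have hmt : m = t := by
    rcases le_total a b with hab | hab
    · refine hadm (κ t) m t hm ht ⟨b - a, by omega, add_right_cancel (b := (a : ZMod e)) ?_⟩
        ⟨0, by omega, by simp⟩
      rw [heq, add_assoc, ← Nat.cast_add, Nat.sub_add_cancel hab]
    · refine (hadm (κ m) t m ht hm ⟨a - b, by omega, add_right_cancel (b := (b : ZMod e)) ?_⟩
        ⟨0, by omega, by simp⟩).symm
      rw [← heq, add_assoc, ← Nat.cast_add, Nat.sub_add_cancel hab]
  subst hmt
  have hab := add_left_cancel heq
  rw [ZMod.natCast_eq_natCast_iff', Nat.mod_eq_of_lt (by omega), Nat.mod_eq_of_lt (by omega)]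
    at hab
  exact ⟨rfl, hab⟩

theorem HAdmissible.val_add_le [NeZero e] (hadm : HAdmissible e h ℓ κ) {m t : ℕ} (hm : m < ℓ)
    (ht : t < ℓ) (hne : m ≠ t) (hle : (κ t).val ≤ (κ m).val) : (κ t).val + h ≤ (κ m).val := by
  by_contra! hlt
  refine hne (hadm (κ t) m t hm ht ⟨(κ m).val - (κ t).val, by omega, ?_⟩ ⟨0, by omega, by simp⟩)
  have hcast : (((κ m).val : ℕ) : ZMod e) =
      (((κ t).val + ((κ m).val - (κ t).val) : ℕ) : ZMod e) := by
    rw [Nat.add_sub_cancel' hle]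
  rwa [ZMod.natCast_zmod_val, Nat.cast_add, ZMod.natCast_zmod_val] at hcast

/-- Normalization rules out the one coincidence that admissibility allows: the last
charge block `κ t, …, κ t + h - 1` ending right before an earlier charge `κ m`. -/
theorem kappa_ne_add_of_le (hadm : HAdmissible e h ℓ κ) (hnorm : Normalized e h ℓ κ)
    (he : h < e) (hh : 0 < h) {m t : ℕ} (hmt : m ≤ t) (ht : t < ℓ) : κ m ≠ κ t + h := by
  have : NeZero e := ⟨by omega⟩
  intro heq
  rcases hmt.eq_or_lt with rfl | hlt
  · have h0 : ((h : ℕ) : ZMod e) = 0 := by simpa using heq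
    rw [ZMod.natCast_eq_zero_iff] at h0
    exact absurd (Nat.le_of_dvd hh h0) (by omega)
  have hval := congrArg ZMod.val heq
  rw [ZMod.val_add, ZMod.val_natCast_of_lt he] at hval
  have hv := hnorm.1 m t hlt ht
  have hte := ZMod.val_lt (κ t)
  have hwrap : e ≤ (κ t).val + h := by
    by_contra! hwrap
    rw [Nat.mod_eq_of_lt hwrap] at hval
    omega
  rw [Nat.mod_eq_sub_mod hwrap, Nat.mod_eq_of_lt (by omega)] at hval
  have htl : t = ℓ - 1 := by
    by_contra htl
    have hnext := hadm.val_add_le (m := t + 1) (t := t) (by omega) ht (by omega)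
      (hnorm.1 t (t + 1) (by omega) (by omega)).le
    have := ZMod.val_lt (κ (t + 1))
    omega
  have hm0 : m = 0 := by
    by_contra hm0
    have := hadm.val_add_le (m := m) (t := 0) (by omega) (by omega) hm0
      (hnorm.1 0 m (by omega) (by omega)).le
    omega
  subst htl hm0
  exact hnorm.2 heq.symm

theorem kappa_add_ne_add_add (hadm : HAdmissible e h ℓ κ) (hnorm : Normalized e h ℓ κ) (he : h < e)
    {m t a b δ : ℕ} (hmt : m ≤ t) (hab : m = t → a < b) (ht : t < ℓ) (ha : a < h) (hb : b < h)
    (hδ : δ ≤ 1) : κ m + a ≠ κ t + b + δ := by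
  intro heq
  have hm : m < ℓ := by omega
  interval_cases δ
  · rw [Nat.cast_zero, add_zero] at heq
    obtain ⟨rfl, rfl⟩ := hadm.eq_of_add_eq he hm ht ha hb heq
    exact lt_irrefl _ (hab rfl)
  rw [Nat.cast_one, add_assoc, ← Nat.cast_add_one] at heq
  by_cases hb1 : b + 1 < h
  · obtain ⟨rfl, hab'⟩ := hadm.eq_of_add_eq he hm ht ha hb1 heq
    have := hab rfl
    omega
  rcases Nat.eq_zero_or_pos a with rfl | ha0
  · rw [Nat.cast_zero, add_zero, show b + 1 = h by omega] at heq
    exact kappa_ne_add_of_le hadm hnorm he (by omega) hmt ht heq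
  · have heq' : κ m + (a - 1 : ℕ) = κ t + b := by
      apply add_right_cancel (b := (1 : ZMod e))
      rw [add_assoc, ← Nat.cast_add_one, Nat.sub_add_cancel ha0, heq, Nat.cast_add_one, add_assoc]
    obtain ⟨rfl, hab'⟩ := hadm.eq_of_add_eq he hm ht (by omega) hb heq'
    have := hab rfl
    omega

/-- The point `ε_1 + ⋯ + ε_N`, which is the `N`-th point of `det(s)` for `N ≤ h ℓ`. -/
def onesBelow (N : ℕ) : ℕ → ℝ := fun a => if a < N then 1 else 0

def PrefixOffWalls (e h ℓ : ℕ) (κ : ℕ → ZMod e) : Prop :=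
  ∀ (k i j : ℕ) (r : ℤ), i < j → j < h * ℓ → ¬OnWall e h κ (onesBelow k) i j r

theorem intCast_rhoZ [NeZero e] (a : ℕ) :
    ((rhoZ e h κ a : ℤ) : ZMod e) = -(κ (a / h) + ((a % h : ℕ) : ZMod e)) := by
  simp only [rhoZ, Int.cast_sub, Int.cast_natCast, ZMod.natCast_self, ZMod.natCast_zmod_val]
  ring

theorem prefixOffWalls (he : h * ℓ < e) (hadm : HAdmissible e h ℓ κ)
    (hnorm : Normalized e h ℓ κ) : PrefixOffWalls e h ℓ κ := by
  intro k i j r hij hj hwall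
  have hh : 0 < h := Nat.pos_of_ne_zero fun h0 => by simp [h0] at hj
  have hℓ : 0 < ℓ := Nat.pos_of_ne_zero fun h0 => by simp [h0] at hj
  have he' : h < e := lt_of_le_of_lt (Nat.le_mul_of_pos_right h hℓ) he
  have : NeZero e := ⟨by omega⟩
  obtain ⟨δ, hδ, hsub⟩ : ∃ δ : ℕ, δ ≤ 1 ∧ onesBelow k i - onesBelow k j = δ := by
    unfold onesBelow
    by_cases hjk : j < k
    · exact ⟨0, zero_le_one, by simp [hjk, hij.trans hjk]⟩
    by_cases hik : i < k
    · exact ⟨1, le_rfl, by simp [hik, hjk]⟩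
    · exact ⟨0, zero_le_one, by simp [hik, hjk]⟩
  have hint : (δ : ℤ) + rhoZ e h κ i - rhoZ e h κ j = r * e := by
    have : ((δ + rhoZ e h κ i - rhoZ e h κ j : ℤ) : ℝ) = ((r * e : ℤ) : ℝ) := by
      unfold OnWall pairV at hwall
      push_cast
      linarith
    exact_mod_cast this
  have hz := congrArg (Int.cast : ℤ → ZMod e) hint
  push_cast at hz
  rw [intCast_rhoZ, intCast_rhoZ, ZMod.natCast_self, mul_zero] at hz
  have hdi := Nat.div_add_mod i h
  have hdj := Nat.div_add_mod j h
  refine kappa_add_ne_add_add hadm hnorm he' (Nat.div_le_div_right hij.le) (fun hq => ?_)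
    (Nat.div_lt_of_lt_mul hj) (Nat.mod_lt i hh) (Nat.mod_lt j hh) hδ (by linear_combination -hz)
  rw [hq] at hdi
  omega

end Walls

section Paths

variable {e h ℓ n N : ℕ} {κ : ℕ → ZMod e}

theorem pts_zero (s : ℕ → ℕ) : pts s 0 = 0 := by
  funext a
  simp [pts]

theorem pts_succ (s : ℕ → ℕ) (k : ℕ) : pts s (k + 1) = pts s k + Pi.single (s k) 1 := by
  funext a
  by_cases hsk : s k = a
  · simp [pts, Finset.range_add_one, Finset.filter_insert, hsk, Finset.card_insert_of_notMem]
  · simp [pts, Finset.range_add_one, Finset.filter_insert, hsk, Ne.symm hsk]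

theorem onesBelow_succ (k : ℕ) : onesBelow (k + 1) = onesBelow k + Pi.single k 1 := by
  funext a
  rcases lt_trichotomy a k with hak | rfl | hak
  · simp [onesBelow, hak, hak.trans (Nat.lt_succ_self k), hak.ne]
  · simp [onesBelow]
  · simp [onesBelow, not_lt.2 hak.le, hak.ne', show ¬a < k + 1 by omega]

theorem eq_of_pts_succ {s t : ℕ → ℕ} {k : ℕ} (h0 : pts s k = pts t k)
    (h1 : pts s (k + 1) = pts t (k + 1)) : s k = t k := by
  rw [pts_succ, pts_succ, h0, add_right_inj] at h1
  by_contra hne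
  simpa [Pi.single_apply, hne] using congrFun h1 (s k)

theorem detPath_of_lt (s : ℕ → ℕ) {k : ℕ} (hk : k < N) : detPath N n s k = k := by
  simp [detPath, hk]

theorem detPath_add (s : ℕ → ℕ) {l : ℕ} (hl : l < n) : detPath N n s (N + l) = s l := by
  simp [detPath, hl]

theorem pts_detPath_of_le (s : ℕ → ℕ) {l : ℕ} (hl : l ≤ N) :
    pts (detPath N n s) l = onesBelow l := by
  induction l with
  | zero =>
    funext a
    simp [pts_zero, onesBelow]
  | succ l ih => rw [pts_succ, ih (by omega), onesBelow_succ, detPath_of_lt s (by omega)]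

theorem pts_detPath_add (s : ℕ → ℕ) {l : ℕ} (hl : l ≤ n) :
    pts (detPath N n s) (N + l) = onesBelow N + pts s l := by
  induction l with
  | zero => rw [add_zero, pts_detPath_of_le s le_rfl, pts_zero, add_zero]
  | succ l ih =>
    rw [← add_assoc, pts_succ, ih (by omega), detPath_add s (by omega), pts_succ, add_assoc]

theorem isPath_detPath {s : ℕ → ℕ} (hs : IsPath N n s) : IsPath N (n + N) (detPath N n s) := by
  refine ⟨fun k hk => ?_, fun k hk => by simp [detPath, show ¬k < N by omega,
    show ¬k < N + n by omega]⟩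
  simp only [detPath]
  split_ifs with h1 h2
  · exact h1
  · exact hs.1 _ (by omega)
  · omega

theorem detPath_inj {s t : ℕ → ℕ} (hs : IsPath N n s) (ht : IsPath N n t)
    (hst : detPath N n s = detPath N n t) : s = t := by
  funext l
  by_cases hl : l < n
  · rw [← detPath_add s hl, hst, detPath_add t hl]
  · rw [hs.2 l (not_lt.1 hl), ht.2 l (not_lt.1 hl)]

theorem exists_eq_detPath {t' : ℕ → ℕ} (ht' : IsPath N (n + N) t') (hpre : ∀ l < N, t' l = l) :
    ∃ t, IsPath N n t ∧ t' = detPath N n t := by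
  refine ⟨fun l => if l < n then t' (N + l) else 0,
    ⟨fun l hl => by simpa [hl] using ht'.1 (N + l) (by omega), fun l hl => by simp [not_lt.2 hl]⟩,
    funext fun l => ?_⟩
  simp only [detPath]
  split_ifs with h1 h2 h3
  · exact hpre l h1
  · rw [Nat.add_sub_cancel' (not_lt.1 h1)]
  · omega
  · exact ht'.2 l (by omega)

theorem pairV_onesBelow_add {i j : ℕ} (hi : i < N) (hj : j < N) (x : ℕ → ℝ) :
    pairV e h κ (onesBelow N + x) i j = pairV e h κ x i j := by
  simp only [pairV, Pi.add_apply, onesBelow, if_pos hi, if_pos hj]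
  ring

theorem reflV_onesBelow_add {i j : ℕ} (hi : i < N) (hj : j < N) (r : ℤ) (x : ℕ → ℝ) :
    reflV e h κ i j r (onesBelow N + x) = onesBelow N + reflV e h κ i j r x := by
  funext a
  simp only [reflV, pairV_onesBelow_add hi hj, Pi.add_apply]
  ring

theorem onWall_onesBelow_add_iff {i j : ℕ} (hi : i < N) (hj : j < N) (r : ℤ) (x : ℕ → ℝ) :
    OnWall e h κ (onesBelow N + x) i j r ↔ OnWall e h κ x i j r := by
  rw [OnWall, OnWall, pairV_onesBelow_add hi hj]

theorem dval_onesBelow_add {i j : ℕ} (hi : i < N) (hj : j < N) (x y : ℕ → ℝ) (r : ℤ) :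
    dval e h κ (onesBelow N + x) (onesBelow N + y) i j r = dval e h κ x y i j r := by
  unfold dval OnWall InLt InGt
  rw [pairV_onesBelow_add hi hj, pairV_onesBelow_add hi hj]

theorem stepDeg_onesBelow_add (x y : ℕ → ℝ) :
    stepDeg e h ℓ κ (onesBelow (h * ℓ) + x) (onesBelow (h * ℓ) + y) = stepDeg e h ℓ κ x y := by
  refine Finset.sum_congr rfl fun i hi => Finset.sum_congr rfl fun j hj => ?_
  simp only [dval_onesBelow_add (Finset.mem_range.1 hi) (Finset.mem_range.1 hj)]

theorem stepDeg_onesBelow_eq_zero (hw : PrefixOffWalls e h ℓ κ) (k k' : ℕ) :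
    stepDeg e h ℓ κ (onesBelow k) (onesBelow k') = 0 := by
  refine Finset.sum_eq_zero fun i _ => Finset.sum_eq_zero fun j hj => ?_
  split_ifs with hij
  · refine finsum_eq_zero_of_forall_eq_zero fun r => ?_
    have hj := Finset.mem_range.1 hj
    rw [dval, if_neg fun hr => hw k i j r hij hj hr.1, if_neg fun hr => hw k' i j r hij hj hr.2]
  · rfl

theorem pathDeg_detPath (hw : PrefixOffWalls e h ℓ κ) (s : ℕ → ℕ) :
    pathDeg e h ℓ κ (n + h * ℓ) (detPath (h * ℓ) n s) = pathDeg e h ℓ κ n s := by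
  rw [pathDeg, pathDeg, add_comm n, Finset.sum_range_add, Finset.sum_eq_zero, zero_add]
  · refine Finset.sum_congr rfl fun k hk => ?_
    have hk := Finset.mem_range.1 hk
    rw [add_assoc, pts_detPath_add s hk.le, pts_detPath_add s hk, stepDeg_onesBelow_add]
  · intro k hk
    have hk := Finset.mem_range.1 hk
    rw [pts_detPath_of_le s hk.le, pts_detPath_of_le s hk]
    exact stepDeg_onesBelow_eq_zero hw k (k + 1)

theorem forall_pts_detPath_eq_iff {s t : ℕ → ℕ} {k : ℕ} (hk : k ≤ n) :
    (∀ l ≤ N + k, pts (detPath N n t) l = pts (detPath N n s) l) ↔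
      ∀ l ≤ k, pts t l = pts s l := by
  constructor
  · intro H l hl
    have := H (N + l) (by omega)
    rwa [pts_detPath_add _ (hl.trans hk), pts_detPath_add _ (hl.trans hk), add_right_inj] at this
  · intro H l hl
    rcases le_or_gt l N with hlN | hlN
    · rw [pts_detPath_of_le _ hlN, pts_detPath_of_le _ hlN]
    · obtain ⟨l, rfl⟩ := Nat.exists_eq_add_of_le hlN.le
      rw [pts_detPath_add _ (by omega), pts_detPath_add _ (by omega), H l (by omega)]

theorem forall_pts_detPath_eq_reflV_iff {s t : ℕ → ℕ} {k i j : ℕ} (hi : i < N) (hj : j < N)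
    (r : ℤ) :
    (∀ l, N + k ≤ l → l ≤ n + N →
        pts (detPath N n t) l = reflV e h κ i j r (pts (detPath N n s) l)) ↔
      ∀ l, k ≤ l → l ≤ n → pts t l = reflV e h κ i j r (pts s l) := by
  constructor
  · intro H l hkl hln
    have := H (N + l) (by omega) (by omega)
    rwa [pts_detPath_add _ hln, pts_detPath_add _ hln, reflV_onesBelow_add hi hj,
      add_right_inj] at this
  · intro H l hkl hln
    obtain ⟨l, rfl⟩ := Nat.exists_eq_add_of_le (show N ≤ l by omega)
    rw [pts_detPath_add _ (by omega), pts_detPath_add _ (by omega), reflV_onesBelow_add hi hj,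
      H l (by omega) (by omega)]

theorem reflStep_detPath {s t : ℕ → ℕ} (hst : ReflStep e h ℓ n κ s t) :
    ReflStep e h ℓ (n + h * ℓ) κ (detPath (h * ℓ) n s) (detPath (h * ℓ) n t) := by
  obtain ⟨hs, ht, k, i, j, r, hk1, hkn, hij, hj, hwall, hbefore, hafter⟩ := hst
  have hi := hij.trans hj
  refine ⟨isPath_detPath hs, isPath_detPath ht, h * ℓ + k, i, j, r, by omega, by omega, hij, hj,
    ?_, (forall_pts_detPath_eq_iff hkn).2 hbefore,
    (forall_pts_detPath_eq_reflV_iff hi hj r).2 hafter⟩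
  rwa [pts_detPath_add _ hkn, onWall_onesBelow_add_iff hi hj]

theorem exists_reflStep_of_reflStep_detPath (hw : PrefixOffWalls e h ℓ κ) {s t' : ℕ → ℕ}
    (hs : IsPath (h * ℓ) n s)
    (hst : ReflStep e h ℓ (n + h * ℓ) κ (detPath (h * ℓ) n s) t') :
    ∃ t, ReflStep e h ℓ n κ s t ∧ t' = detPath (h * ℓ) n t := by
  obtain ⟨-, ht', k, i, j, r, hk1, hkn, hij, hj, hwall, hbefore, hafter⟩ := hst
  have hi := hij.trans hj
  have hk : h * ℓ < k := by
    by_contra! hk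
    rw [pts_detPath_of_le _ hk] at hwall
    exact hw k i j r hij hj hwall
  obtain ⟨k, rfl⟩ := Nat.exists_eq_add_of_le hk.le
  obtain ⟨t, ht, rfl⟩ := exists_eq_detPath ht' fun l hl => by
    rw [eq_of_pts_succ (hbefore l (by omega)) (hbefore (l + 1) (by omega)), detPath_of_lt s hl]
  refine ⟨t, ⟨hs, ht, k, i, j, r, by omega, by omega, hij, hj, ?_,
    (forall_pts_detPath_eq_iff (by omega)).1 hbefore,
    (forall_pts_detPath_eq_reflV_iff hi hj r).1 hafter⟩, rfl⟩
  rwa [pts_detPath_add _ (by omega), onWall_onesBelow_add_iff hi hj] at hwall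

theorem exists_pathSim_of_pathSim_detPath (hw : PrefixOffWalls e h ℓ κ) {s t' : ℕ → ℕ}
    (hs : IsPath (h * ℓ) n s)
    (hsim : PathSim e h ℓ (n + h * ℓ) κ (detPath (h * ℓ) n s) t') :
    ∃ t, IsPath (h * ℓ) n t ∧ PathSim e h ℓ n κ s t ∧ t' = detPath (h * ℓ) n t := by
  induction hsim with
  | refl => exact ⟨s, hs, .refl, rfl⟩
  | tail _ hstep ih =>
    obtain ⟨t, ht, hsim, rfl⟩ := ih
    obtain ⟨u, hu, rfl⟩ := exists_reflStep_of_reflStep_detPath hw ht hstep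
    exact ⟨u, hu.2.1, hsim.tail hu, rfl⟩

theorem bijOn_detPath (hw : PrefixOffWalls e h ℓ κ) {s₀ : ℕ → ℕ} (hs₀ : IsPath (h * ℓ) n s₀) :
    BijOn (detPath (h * ℓ) n) {s | IsPath (h * ℓ) n s ∧ PathSim e h ℓ n κ s₀ s}
      {s' | IsPath (h * ℓ) (n + h * ℓ) s' ∧
        PathSim e h ℓ (n + h * ℓ) κ (detPath (h * ℓ) n s₀) s'} := by
  refine ⟨fun s ⟨hs, hsim⟩ =>
      ⟨isPath_detPath hs, hsim.lift (detPath (h * ℓ) n) fun _ _ => reflStep_detPath⟩,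
    fun s ⟨hs, _⟩ t ⟨ht, _⟩ hst => detPath_inj hs ht hst, fun s' ⟨_, hsim⟩ => ?_⟩
  obtain ⟨t, ht, hsimt, rfl⟩ := exists_pathSim_of_pathSim_detPath hw hs₀ hsim
  exact ⟨t, ⟨ht, hsimt⟩, rfl⟩

end Paths

theorem statement_7_general (h ℓ e n : ℕ) (κ : ℕ → ZMod e)
    (he : h * ℓ < e)
    (hadm : HAdmissible e h ℓ κ) (hnorm : Normalized e h ℓ κ)
    (μ : MultiPartition ℓ) (hμ : size μ = n) (hμc : HCols h μ) :
    tPath h ℓ (n + h * ℓ) (detMP h μ hμc) = detPath (h * ℓ) n (tPath h ℓ n μ) ∧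
    Set.BijOn (detPath (h * ℓ) n)
      {s : ℕ → ℕ | IsPath (h * ℓ) n s ∧ PathSim e h ℓ n κ (tPath h ℓ n μ) s}
      {s' : ℕ → ℕ | IsPath (h * ℓ) (n + h * ℓ) s' ∧
        PathSim e h ℓ (n + h * ℓ) κ (tPath h ℓ (n + h * ℓ) (detMP h μ hμc)) s'} ∧
    (∀ s : ℕ → ℕ, IsPath (h * ℓ) n s → PathSim e h ℓ n κ (tPath h ℓ n μ) s →
      pts (detPath (h * ℓ) n s) (n + h * ℓ) =
        fun a => (if a < h * ℓ then (1 : ℝ) else 0) + pts s n a) ∧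
    (∀ s : ℕ → ℕ, IsPath (h * ℓ) n s → PathSim e h ℓ n κ (tPath h ℓ n μ) s →
      pathDeg e h ℓ κ (n + h * ℓ) (detPath (h * ℓ) n s) = pathDeg e h ℓ κ n s) := by
  have hn : (diag μ).ncard = n := μ.ncard_diag.trans hμ
  have hwalls := prefixOffWalls he hadm hnorm
  refine ⟨tPath_detMP hμc hn, ?_, fun s _ _ => ?_, fun s _ _ => pathDeg_detPath hwalls s⟩
  · rw [tPath_detMP hμc hn]
    exact bijOn_detPath hwalls (isPath_tPath hμc hn)
  · rw [add_comm n]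
    exact pts_detPath_add s le_rfl

theorem statement_7 (h ℓ e n : ℕ) (κ : ℕ → ZMod e)
    (hh : 1 ≤ h) (hl : 1 ≤ ℓ) (he : h * ℓ < e)
    (hadm : HAdmissible e h ℓ κ) (hnorm : Normalized e h ℓ κ)
    (μ : MultiPartition ℓ) (hμ : size μ = n) (hμc : HCols h μ) :
    tPath h ℓ (n + h * ℓ) (detMP h μ hμc) = detPath (h * ℓ) n (tPath h ℓ n μ) ∧
    Set.BijOn (detPath (h * ℓ) n)
      {s : ℕ → ℕ | IsPath (h * ℓ) n s ∧ PathSim e h ℓ n κ (tPath h ℓ n μ) s}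
      {s' : ℕ → ℕ | IsPath (h * ℓ) (n + h * ℓ) s' ∧
        PathSim e h ℓ (n + h * ℓ) κ (tPath h ℓ (n + h * ℓ) (detMP h μ hμc)) s'} ∧
    (∀ s : ℕ → ℕ, IsPath (h * ℓ) n s → PathSim e h ℓ n κ (tPath h ℓ n μ) s →
      pts (detPath (h * ℓ) n s) (n + h * ℓ) =
        fun a => (if a < h * ℓ then (1 : ℝ) else 0) + pts s n a) ∧
    (∀ s : ℕ → ℕ, IsPath (h * ℓ) n s → PathSim e h ℓ n κ (tPath h ℓ n μ) s →
      pathDeg e h ℓ κ (n + h * ℓ) (detPath (h * ℓ) n s) = pathDeg e h ℓ κ n s) :=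
  statement_7_general h ℓ e n κ he hadm hnorm μ hμ hμc

end BC
end
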